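/- arXiv:1304.1462 — 5 statements merged into one kernel-verified Lean document; each statement's English description precedes it below -/
import Mathlib

section
/- Let q be a prime, let n ≥ 1, and let C_α be a Singer subgroup of GL(n,q), i.e., the cyclic subgroup generated by an element of order q^n − 1. Then the normalizer A_α of C_α in GL(n,q) has order n·(q^n − 1). -/
/-!
The subalgebra `A = F[g]` of `End_F V` has at most `|V|` elements by Cayley–Hamilton, while its
unit group contains the `|V| - 1` powers of `g`. Hence `A` is a field with `|V|` elements, `V` is
a one-dimensional `A`-vector space, and under `V ≅ A` the Singer subgroup `⟨g⟩ = Aˣ` acts by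
multiplication. In `GL_F(A)` the normalizer of the multiplications consists exactly of the maps
`x ↦ c * σ x` with `c ∈ Aˣ` and `σ ∈ Gal(A/F)`, so it has `|Aˣ| * [A : F] = (q ^ n - 1) * n`
elements.
-/

open Module Subgroup LinearMap

theorem Subgroup.card_normalizer_map_mulEquiv {G G' : Type*} [Group G] [Group G'] (φ : G ≃* G')
    (H : Subgroup G) :
    Nat.card (normalizer ((H.map φ.toMonoidHom : Subgroup G') : Set G')) =
      Nat.card (normalizer (H : Set G)) := by
  rw [← map_equiv_normalizer_eq, card_map_of_injective φ.injective]

theorem isUnit_of_card_le_card_units_add_one {M : Type*} [MonoidWithZero M] [Finite M]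
    (h : Nat.card M ≤ Nat.card Mˣ + 1) {a : M} (ha : a ≠ 0) : IsUnit a := by
  classical
  have : Nontrivial M := ⟨⟨a, 0, ha⟩⟩
  let f : Mˣ → {b : M // b ≠ 0} := fun u => ⟨u, u.ne_zero⟩
  have hf : Function.Injective f := fun u v huv => Units.ext (congrArg Subtype.val huv)
  have hcompl : Nat.card {b : M // b = 0} + Nat.card {b : M // b ≠ 0} = Nat.card M := by
    rw [← Nat.card_sum, Nat.card_congr (Equiv.sumCompl (· = (0 : M)))]
  rw [Nat.card_unique] at hcompl
  obtain ⟨u, hu⟩ := (hf.bijective_of_nat_card_le (by omega)).2 ⟨a, ha⟩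
  exact ⟨u, congrArg Subtype.val hu⟩

theorem Module.finrank_eq_of_natCard_eq {K M N : Type*} [Field K] [Finite K] [AddCommGroup M]
    [Module K M] [Module.Finite K M] [AddCommGroup N] [Module K N] [Module.Finite K N]
    (h : Nat.card M = Nat.card N) : finrank K M = finrank K N := by
  rw [natCard_eq_pow_finrank (K := K), natCard_eq_pow_finrank (K := K) (V := N)] at h
  exact Nat.pow_right_injective (Finite.one_lt_card (α := K)) h

theorem finrank_adjoin_singleton_le {F V : Type*} [Field F] [AddCommGroup V] [Module F V]
    [FiniteDimensional F V] (f : Module.End F V) :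
    finrank F (Algebra.adjoin F {f}) ≤ finrank F V := by
  classical
  have hspan := Submodule.span_range_natDegree_eq_adjoin f.charpoly_monic f.aeval_self_charpoly
  calc finrank F (Algebra.adjoin F {f})
      = finrank F (Subalgebra.toSubmodule (Algebra.adjoin F {f})) := rfl
    _ ≤ ((Finset.range f.charpoly.natDegree).image (f ^ ·)).card := by
      rw [← hspan]; exact finrank_span_finset_le_card _
    _ ≤ finrank F V := by
      simpa [LinearMap.charpoly_natDegree] using
        Finset.card_image_le (s := Finset.range f.charpoly.natDegree) (f := (f ^ ·))

section SemilinearGroup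

variable (F K : Type*) [Field F] [Field K] [Algebra F K]

def lmulUnits : Kˣ →* GeneralLinearGroup F K :=
  Units.map (Algebra.lmul F K).toMonoidHom

def autUnits : (K ≃ₐ[F] K) →* GeneralLinearGroup F K :=
  (AlgEquiv.toLinearMapHom F K).toHomUnits

@[simp] lemma lmulUnits_apply (c : Kˣ) (x : K) : (lmulUnits F K c : K →ₗ[F] K) x = c * x := rfl

@[simp] lemma autUnits_apply (σ : K ≃ₐ[F] K) (x : K) :
    (autUnits F K σ : K →ₗ[F] K) x = σ x := rfl

variable {F K}

lemma lmulUnits_mul_autUnits_injective :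
    Function.Injective fun p : Kˣ × (K ≃ₐ[F] K) => lmulUnits F K p.1 * autUnits F K p.2 := by
  rintro ⟨c, σ⟩ ⟨c', σ'⟩ h
  have happly (x : K) : c * σ x = c' * σ' x :=
    congrArg (fun f : GeneralLinearGroup F K => (f : K →ₗ[F] K) x) h
  obtain rfl : c = c' := Units.ext (by simpa using happly 1)
  exact Prod.ext rfl (AlgEquiv.ext fun x => mul_left_cancel₀ c.ne_zero (happly x))

lemma lmulUnits_mul_autUnits_mem_normalizer [Finite K] (c : Kˣ) (σ : K ≃ₐ[F] K) :
    lmulUnits F K c * autUnits F K σ ∈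
      normalizer ((lmulUnits F K).range : Set (GeneralLinearGroup F K)) := by
  have : Finite ((lmulUnits F K).range : Set (GeneralLinearGroup F K)) := by
    rw [MonoidHom.coe_range]; infer_instance
  refine mem_normalizer_fintype ?_
  rintro _ ⟨a, rfl⟩
  refine ⟨Units.map (σ : K →* K) a, ?_⟩
  rw [eq_mul_inv_iff_mul_eq]
  ext x
  simp [mul_left_comm]

lemma map_one_mul_map_mul_of_mem_normalizer {h : GeneralLinearGroup F K}
    (hh : h ∈ normalizer ((lmulUnits F K).range : Set (GeneralLinearGroup F K))) (x y : K) :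
    (h : K →ₗ[F] K) 1 * (h : K →ₗ[F] K) (x * y) = (h : K →ₗ[F] K) x * (h : K →ₗ[F] K) y := by
  rcases eq_or_ne x 0 with rfl | hx
  · simp
  obtain ⟨b, hb⟩ := (mem_normalizer_iff.mp hh (lmulUnits F K (Units.mk0 x hx))).mp ⟨_, rfl⟩
  have hcomm : lmulUnits F K b * h = h * lmulUnits F K (Units.mk0 x hx) := by
    rw [hb, inv_mul_cancel_right]
  have happly (y : K) : b * (h : K →ₗ[F] K) y = (h : K →ₗ[F] K) (x * y) := by
    simpa using congrArg (fun f : GeneralLinearGroup F K => (f : K →ₗ[F] K) y) hcomm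
  have hx1 : b * (h : K →ₗ[F] K) 1 = (h : K →ₗ[F] K) x := by simpa using happly 1
  rw [← happly y, ← hx1]
  ring

lemma exists_lmulUnits_mul_autUnits_eq [Finite K] {h : GeneralLinearGroup F K}
    (hh : h ∈ normalizer ((lmulUnits F K).range : Set (GeneralLinearGroup F K))) :
    ∃ p : Kˣ × (K ≃ₐ[F] K), lmulUnits F K p.1 * autUnits F K p.2 = h := by
  have hinj : Function.Injective (h : K →ₗ[F] K) :=
    (GeneralLinearGroup.generalLinearEquiv F K h).injective
  have h1 : (h : K →ₗ[F] K) 1 ≠ 0 := hinj.ne_iff' (map_zero _) |>.mpr one_ne_zero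
  set c := Units.mk0 _ h1
  let σ : K →ₐ[F] K := AlgHom.ofLinearMap (mulLeft F (c⁻¹ : K) ∘ₗ (h : K →ₗ[F] K))
    (inv_mul_cancel₀ h1) (fun x y => by
      simp only [comp_apply, mulLeft_apply, c, Units.val_mk0]
      field_simp
      exact map_one_mul_map_mul_of_mem_normalizer hh x y)
  have hσ : Function.Bijective σ := Finite.injective_iff_bijective.mp σ.toRingHom.injective
  refine ⟨(c, AlgEquiv.ofBijective σ hσ), Units.ext (LinearMap.ext fun x => ?_)⟩
  exact mul_inv_cancel_left₀ c.ne_zero _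

theorem card_normalizer_range_lmulUnits [Finite K] :
    Nat.card (normalizer ((lmulUnits F K).range : Set (GeneralLinearGroup F K))) =
      Nat.card Kˣ * finrank F K := by
  let Ψ : Kˣ × (K ≃ₐ[F] K) → normalizer ((lmulUnits F K).range : Set (GeneralLinearGroup F K)) :=
    fun p => ⟨_, lmulUnits_mul_autUnits_mem_normalizer p.1 p.2⟩
  have hΨ : Function.Bijective Ψ :=
    ⟨fun p q hpq => lmulUnits_mul_autUnits_injective (congrArg Subtype.val hpq),
      fun h => (exists_lmulUnits_mul_autUnits_eq h.2).imp fun _ hp => Subtype.ext hp⟩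
  rw [← Nat.card_congr (Equiv.ofBijective Ψ hΨ), Nat.card_prod, IsGalois.card_aut_eq_finrank]

end SemilinearGroup

section Singer

variable {F V : Type*} [Field F] [Finite F] [AddCommGroup V] [Module F V] [FiniteDimensional F V]

theorem natCard_adjoin_singleton_le (f : Module.End F V) :
    Nat.card (Algebra.adjoin F {f}) ≤ Nat.card V := by
  rw [natCard_eq_pow_finrank (K := F), natCard_eq_pow_finrank (K := F) (V := V)]
  exact Nat.pow_le_pow_right Finite.card_pos (finrank_adjoin_singleton_le f)

theorem exists_adjoin_unit_map_eq (g : GeneralLinearGroup F V) :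
    ∃ u : (Algebra.adjoin F {(g : Module.End F V)})ˣ,
      Units.map ((Algebra.adjoin F {(g : Module.End F V)}).val : _ →* Module.End F V) u = g ∧
        orderOf u = orderOf g := by
  set A := Algebra.adjoin F {(g : Module.End F V)}
  have := Module.finite_of_finite F (M := Module.End F V)
  have hinv : ((g⁻¹ : GeneralLinearGroup F V) : Module.End F V) ∈ A := by
    obtain ⟨k, hk⟩ := mem_powers_iff_mem_zpowers.mpr (inv_mem (mem_zpowers g))
    rw [← hk, Units.val_pow_eq_pow_val]
    exact pow_mem (Algebra.self_mem_adjoin_singleton F _) k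
  let u : Aˣ := ⟨⟨g, Algebra.self_mem_adjoin_singleton F _⟩, ⟨_, hinv⟩, Subtype.ext g.mul_inv,
    Subtype.ext g.inv_mul⟩
  exact ⟨u, Units.ext rfl, (orderOf_injective _
    (Units.map_injective (f := (A.val : A →* Module.End F V)) Subtype.val_injective) u).symm⟩

theorem card_sub_one_le_card_units_adjoin {g : GeneralLinearGroup F V}
    (hg : orderOf g = Nat.card V - 1) :
    Nat.card V - 1 ≤ Nat.card (Algebra.adjoin F {(g : Module.End F V)})ˣ := by
  have := Module.finite_of_finite F (M := Module.End F V)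
  obtain ⟨u, -, hu⟩ := exists_adjoin_unit_map_eq g
  rw [← hg, ← hu]
  exact _root_.orderOf_le_card

theorem isField_adjoin_of_orderOf_eq {g : GeneralLinearGroup F V}
    (hg : orderOf g = Nat.card V - 1) : IsField (Algebra.adjoin F {(g : Module.End F V)}) := by
  have := Module.finite_of_finite F (M := Module.End F V)
  have := Module.finite_of_finite F (M := V)
  have : Nontrivial V := Finite.one_lt_card_iff_nontrivial.mp (by have := orderOf_pos g; omega)
  set A := Algebra.adjoin F {(g : Module.End F V)}
  have : Nat.card V - 1 ≤ Nat.card Aˣ := card_sub_one_le_card_units_adjoin hg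
  have : Nat.card A ≤ Nat.card V := natCard_adjoin_singleton_le _
  exact { exists_pair_ne := exists_pair_ne A
          mul_comm := IsMulCommutative.is_comm.comm
          mul_inv_cancel := fun ha =>
            (isUnit_of_card_le_card_units_add_one (by omega) ha).exists_right_inv }

theorem natCard_adjoin_of_orderOf_eq {g : GeneralLinearGroup F V}
    (hg : orderOf g = Nat.card V - 1) :
    Nat.card (Algebra.adjoin F {(g : Module.End F V)}) = Nat.card V := by
  set A := Algebra.adjoin F {(g : Module.End F V)}
  let : Field A := (isField_adjoin_of_orderOf_eq hg).toField
  have := Module.finite_of_finite F (M := Module.End F V)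
  have : Nat.card V - 1 ≤ Nat.card Aˣ := card_sub_one_le_card_units_adjoin hg
  have : Nat.card A ≤ Nat.card V := natCard_adjoin_singleton_le _
  have := Nat.card_units A
  have := Nat.card_pos (α := A)
  omega

theorem card_normalizer_zpowers_of_orderOf_eq (g : GeneralLinearGroup F V)
    (hg : orderOf g = Nat.card V - 1) :
    Nat.card (normalizer ((zpowers g : Subgroup (GeneralLinearGroup F V)) :
      Set (GeneralLinearGroup F V))) = finrank F V * (Nat.card V - 1) := by
  set A := Algebra.adjoin F {(g : Module.End F V)}
  let : Field A := (isField_adjoin_of_orderOf_eq hg).toField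
  have := Module.finite_of_finite F (M := Module.End F V)
  have := Module.finite_of_finite F (M := V)
  have : Module.Finite A V := .of_finite
  have hcard : Nat.card V = Nat.card A := (natCard_adjoin_of_orderOf_eq hg).symm
  obtain ⟨u, hu, hu_order⟩ := exists_adjoin_unit_map_eq g
  let e : V ≃ₗ[A] A := LinearEquiv.ofFinrankEq V A (finrank_eq_of_natCard_eq hcard)
  let φ := GeneralLinearGroup.congrLinearEquiv (e.restrictScalars F)
  have hφ : φ g = lmulUnits F A u := by
    refine Units.ext (LinearMap.ext fun x => ?_)
    show e ((g : Module.End F V) (e.symm x)) = (u : A) * x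
    have : (g : Module.End F V) (e.symm x) = (u : A) • e.symm x :=
      (congrArg (fun w : GeneralLinearGroup F V => (w : Module.End F V) (e.symm x)) hu).symm
    rw [this, map_smul, LinearEquiv.apply_symm_apply, smul_eq_mul]
  have hu_gen : zpowers u = ⊤ :=
    eq_top_of_card_eq _ (by rw [Nat.card_zpowers, hu_order, hg, Nat.card_units, hcard])
  have hmap : (zpowers g).map φ.toMonoidHom = (lmulUnits F A).range := by
    rw [MonoidHom.map_zpowers, MulEquiv.coe_toMonoidHom, hφ, ← MonoidHom.map_zpowers, hu_gen,
      MonoidHom.range_eq_map]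
  rw [← card_normalizer_map_mulEquiv φ, hmap, card_normalizer_range_lmulUnits, Nat.card_units,
    ← hcard, finrank_eq_of_natCard_eq hcard, mul_comm]

end Singer

theorem card_normalizer_singer_general (q n : ℕ) (hq : Nat.Prime q)
    (g : GL (Fin n) (ZMod q)) (hg : orderOf g = q ^ n - 1) :
    Nat.card (Subgroup.normalizer ((Subgroup.zpowers g : Subgroup (GL (Fin n) (ZMod q))) : Set (GL (Fin n) (ZMod q)))) = n * (q ^ n - 1) := by
  have : Fact q.Prime := ⟨hq⟩
  let φ := Matrix.GeneralLinearGroup.toLin (n := Fin n) (R := ZMod q)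
  have hcard : Nat.card (Fin n → ZMod q) = q ^ n := by simp
  have hφg : orderOf (φ g) = Nat.card (Fin n → ZMod q) - 1 := by
    rw [MulEquiv.orderOf_eq, hg, hcard]
  rw [← card_normalizer_map_mulEquiv φ, MonoidHom.map_zpowers, MulEquiv.coe_toMonoidHom,
    card_normalizer_zpowers_of_orderOf_eq _ hφg, Module.finrank_fin_fun, hcard]

/-- Let `q` be a prime and `n ≥ 1`. If `C_α = Subgroup.zpowers g` is a Singer subgroup of
`GL(n, q)` (i.e. generated by an element `g` of order `q ^ n - 1`), then its normalizer
has order `n * (q ^ n - 1)`. -/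
theorem card_normalizer_singer (q n : ℕ) (hq : Nat.Prime q) (hn : 1 ≤ n)
    (g : GL (Fin n) (ZMod q)) (hg : orderOf g = q ^ n - 1) :
    Nat.card (Subgroup.normalizer ((Subgroup.zpowers g : Subgroup (GL (Fin n) (ZMod q))) : Set (GL (Fin n) (ZMod q)))) = n * (q ^ n - 1) :=
  card_normalizer_singer_general q n hq g hg
end

section
/- Let q be a prime, let α be a primitive element of F_{q^n}, and let X and Y be k-dimensional F_q-subspaces of F_{q^n} lying in the same orbit under the normalizer A_α of the Singer subgroup C_α (i.e., Y is obtained from X by a composition of multiplication by a power of α and a power of the Frobenius map x ↦ x^q). Write the nonzero elements of X as α^{x_1}, ..., α^{x_m} and those of Y as α^{y_1}, ..., α^{y_m}, with exponents in Z_{q^n−1} and m = q^k − 1. Then inv_N(X) = inv_N(Y), where inv_N(X) := { ρ(x_i − x_j) : 1 ≤ i, j ≤ m, i ≠ j } and ρ(x) := min{ x·q^i mod (q^n − 1) : 0 ≤ i ≤ n − 1 }. -/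
/-- The Frobenius map `x ↦ x ^ q` on `GaloisField q n`, as a `ZMod q`-linear map. -/
noncomputable def frobLin (q n : ℕ) [Fact (Nat.Prime q)] :
    GaloisField q n →ₗ[ZMod q] GaloisField q n where
  toFun x := x ^ q
  map_add' x y := add_pow_char x y q
  map_smul' c x := by
    simp only [RingHom.id_apply, smul_pow, ZMod.pow_card]

private lemma pow_mod_modEq_aux (q n N : ℕ) (hN : q ^ n = N + 1) (a : ℕ) :
    q ^ a ≡ q ^ (a % n) [MOD N] := by
  conv_lhs => rw [← Nat.div_add_mod a n]
  rw [pow_add, pow_mul]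
  have h1 : q ^ n ≡ 1 [MOD N] := by
    rw [hN]; unfold Nat.ModEq; rw [Nat.add_mod_left]
  calc (q ^ n) ^ (a / n) * q ^ (a % n)
      ≡ 1 ^ (a / n) * q ^ (a % n) [MOD N] := ((h1.pow _).mul_right _)
    _ = q ^ (a % n) := by rw [one_pow, one_mul]

private lemma rho_set_eq_aux (q n N d t : ℕ) (hn : 0 < n) (hN : q ^ n = N + 1) :
    {y : ℕ | ∃ i < n, y = (d * q ^ t % N) * q ^ i % N} =
    {y : ℕ | ∃ i < n, y = d * q ^ i % N} := by
  have key : ∀ a b : ℕ, a ≡ b [MOD n] → ∀ c : ℕ, c * q ^ a % N = c * q ^ b % N := by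
    intro a b hab c
    have h2 := (pow_mod_modEq_aux q n N hN b).symm
    rw [← hab] at h2
    exact ((pow_mod_modEq_aux q n N hN a).trans h2).mul_left c
  have step : ∀ i : ℕ, (d * q ^ t % N) * q ^ i % N = d * q ^ ((t + i) % n) % N := by
    intro i
    have h1 : (d * q ^ t % N) * q ^ i % N = d * q ^ (t + i) % N := by
      have h2 : (d * q ^ t % N) * q ^ i ≡ d * q ^ t * q ^ i [MOD N] :=
        (Nat.mod_modEq (d * q ^ t) N).mul_right _
      rw [mul_assoc, ← pow_add] at h2
      exact h2
    rw [h1]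
    exact key (t + i) ((t + i) % n) (Nat.mod_modEq _ _).symm d
  ext y
  simp only [Set.mem_setOf_eq]
  constructor
  · rintro ⟨i, hi, rfl⟩
    exact ⟨(t + i) % n, Nat.mod_lt _ hn, step i⟩
  · rintro ⟨i, hi, rfl⟩
    refine ⟨(i + n - t % n) % n, Nat.mod_lt _ hn, ?_⟩
    rw [step]
    obtain ⟨r, s, hr, ht⟩ : ∃ r s : ℕ, r < n ∧ t = n * s + r :=
      ⟨t % n, t / n, Nat.mod_lt _ hn, by rw [Nat.div_add_mod]⟩
    subst ht
    have hrr : (n * s + r) % n = r := by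
      rw [Nat.mul_add_mod]; exact Nat.mod_eq_of_lt hr
    rw [hrr]
    have h : (n * s + r) + (i + n - r) % n ≡ i [MOD n] := by
      calc (n * s + r) + (i + n - r) % n
          ≡ (n * s + r) + (i + n - r) [MOD n] := Nat.ModEq.add_left _ (Nat.mod_modEq _ _)
        _ = n * s + n + i := by omega
        _ ≡ 0 + i [MOD n] :=
            Nat.ModEq.add_right i (Nat.modEq_zero_iff_dvd.mpr ⟨s + 1, by ring⟩)
        _ = i := zero_add i
    exact key i _ (((Nat.mod_modEq _ _).trans h).symm) d


/-- If two `k`-dimensional `ZMod q`-subspaces `X`, `Y` of `GaloisField q n` lie in the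
same orbit under the normalizer `A_α` of the Singer subgroup `C_α` (i.e. `Y` is the
image of `X` under the composition of multiplication by a power of the primitive
element `α` and a power of the Frobenius map), then `inv_N X = inv_N Y`, where
`inv_N W = { ρ (e₁ - e₂ mod (q^n - 1)) : e₁ ≠ e₂, α ^ e₁ ∈ W, α ^ e₂ ∈ W }` and
`ρ x = min { x * q ^ i mod (q ^ n - 1) : 0 ≤ i ≤ n - 1 }`. -/
theorem invN_eq_of_normalizer_orbit (q n k : ℕ) [Fact (Nat.Prime q)] (hn : 0 < n)
    (α : (GaloisField q n)ˣ) (hα : ∀ x : (GaloisField q n)ˣ, x ∈ Subgroup.zpowers α)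
    (X Y : Submodule (ZMod q) (GaloisField q n))
    (hX : Module.finrank (ZMod q) X = k) (hY : Module.finrank (ZMod q) Y = k)
    (horb : ∃ j i : ℕ,
      Y = Submodule.map
        ((LinearMap.mulLeft (ZMod q) ((α : GaloisField q n) ^ j)).comp
          ((frobLin q n ^ i : Module.End (ZMod q) (GaloisField q n)) :
            GaloisField q n →ₗ[ZMod q] GaloisField q n)) X) :
    {r : ℕ | ∃ e₁, e₁ < q ^ n - 1 ∧ ∃ e₂, e₂ < q ^ n - 1 ∧
        (α : GaloisField q n) ^ e₁ ∈ X ∧ (α : GaloisField q n) ^ e₂ ∈ X ∧ e₁ ≠ e₂ ∧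
        r = sInf {y : ℕ | ∃ i < n,
          y = ((e₁ + (q ^ n - 1) - e₂) % (q ^ n - 1)) * q ^ i % (q ^ n - 1)}} =
    {r : ℕ | ∃ e₁, e₁ < q ^ n - 1 ∧ ∃ e₂, e₂ < q ^ n - 1 ∧
        (α : GaloisField q n) ^ e₁ ∈ Y ∧ (α : GaloisField q n) ^ e₂ ∈ Y ∧ e₁ ≠ e₂ ∧
        r = sInf {y : ℕ | ∃ i < n,
          y = ((e₁ + (q ^ n - 1) - e₂) % (q ^ n - 1)) * q ^ i % (q ^ n - 1)}} := by
  classical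
  obtain ⟨j, i, hYX⟩ := horb
  set GF := GaloisField q n
  set N := q ^ n - 1 with hNdef
  have hq2 : 2 ≤ q := (Fact.out : q.Prime).two_le
  have hqn : 2 ≤ q ^ n := le_trans hq2 (Nat.le_self_pow hn.ne' q)
  have hN1 : q ^ n = N + 1 := by omega
  have hNpos : 0 < N := by omega
  haveI : NeZero N := ⟨hNpos.ne'⟩
  have hcard : Nat.card GF = q ^ n := GaloisField.card q n hn.ne'
  have hord : orderOf α = N := by
    rw [orderOf_eq_card_of_forall_mem_zpowers hα, Nat.card_units, hcard]
  -- α ^ a = α ^ b ↔ a ≡ b [MOD N]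
  have hpow : ∀ a b : ℕ, (α : GF) ^ a = (α : GF) ^ b ↔ a ≡ b [MOD N] := by
    intro a b
    rw [← Units.val_pow_eq_pow_val, ← Units.val_pow_eq_pow_val]
    rw [show ((α ^ a : GFˣ) : GF) = ((α ^ b : GFˣ) : GF) ↔ α ^ a = α ^ b from
      ⟨fun h => Units.ext h, fun h => congrArg _ h⟩]
    rw [pow_eq_pow_iff_modEq, hord]
  -- injectivity of casting naturals < N into ZMod N
  have hinj : ∀ a b : ℕ, a < N → b < N → (a : ZMod N) = (b : ZMod N) → a = b := by
    intro a b ha hb h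
    have := (ZMod.natCast_eq_natCast_iff a b N).mp h
    rwa [Nat.ModEq, Nat.mod_eq_of_lt ha, Nat.mod_eq_of_lt hb] at this
  -- q is invertible mod N
  have hq1 : (q : ZMod N) ^ n = 1 := by
    have : ((q ^ n : ℕ) : ZMod N) = ((N + 1 : ℕ) : ZMod N) := by rw [hN1]
    push_cast at this
    rwa [ZMod.natCast_self, zero_add] at this
  have hcancel : ∀ a b : ZMod N, a * (q : ZMod N) ^ i = b * (q : ZMod N) ^ i → a = b := by
    intro a b h
    have hn1 : i + i * (n - 1) = i * n := by
      have h : n - 1 + 1 = n := by omega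
      calc i + i * (n - 1) = i * (n - 1 + 1) := by ring
        _ = i * n := by rw [h]
    have hiu : (q : ZMod N) ^ i * (q : ZMod N) ^ (i * (n - 1)) = 1 := by
      rw [← pow_add, hn1, mul_comm i n, pow_mul, hq1, one_pow]
    have := congrArg (· * (q : ZMod N) ^ (i * (n - 1))) h
    simpa only [mul_assoc, hiu, mul_one] using this
  -- the action of the linear map on powers of α
  have hiter : ∀ (m : ℕ) (x : GF),
      ((frobLin q n ^ m : Module.End (ZMod q) GF) : GF →ₗ[ZMod q] GF) x = x ^ q ^ m := by
    intro m
    induction m with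
    | zero => intro x; simp
    | succ m ih =>
        intro x
        rw [pow_succ', Module.End.mul_apply]
        show frobLin q n
          (((frobLin q n ^ m : Module.End (ZMod q) GF) : GF →ₗ[ZMod q] GF) x) = _
        rw [ih]
        show (x ^ q ^ m) ^ q = x ^ q ^ (m + 1)
        rw [← pow_mul, ← pow_succ]
  have hfapply : ∀ e : ℕ,
      ((LinearMap.mulLeft (ZMod q) ((α : GF) ^ j)).comp
          ((frobLin q n ^ i : Module.End (ZMod q) GF) : GF →ₗ[ZMod q] GF)) ((α : GF) ^ e)
        = (α : GF) ^ (e * q ^ i + j) := by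
    intro e
    rw [LinearMap.comp_apply, hiter, LinearMap.mulLeft_apply, ← pow_mul, ← pow_add,
      add_comm j (e * q ^ i)]
  -- forward membership
  have hmemY : ∀ e : ℕ, (α : GF) ^ e ∈ X → (α : GF) ^ (e * q ^ i + j) ∈ Y := by
    intro e he
    rw [hYX]
    exact ⟨(α : GF) ^ e, he, hfapply e⟩
  -- backward membership
  have hmemX : ∀ e' : ℕ, (α : GF) ^ e' ∈ Y →
      ∃ e, e < N ∧ (α : GF) ^ e ∈ X ∧ e' ≡ e * q ^ i + j [MOD N] := by
    intro e' hmem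
    rw [hYX, Submodule.mem_map] at hmem
    obtain ⟨x, hxX, hfx⟩ := hmem
    have hx0 : x ≠ 0 := by
      rintro rfl
      rw [map_zero] at hfx
      exact (Units.ne_zero (α ^ e')) (by rw [Units.val_pow_eq_pow_val, ← hfx])
    obtain ⟨m, hm⟩ : ∃ m : ℕ, α ^ m = Units.mk0 x hx0 :=
      mem_powers_iff_mem_zpowers.mpr (hα (Units.mk0 x hx0))
    have hxe : x = (α : GF) ^ (m % N) := by
      rw [(hpow (m % N) m).mpr (Nat.mod_modEq _ _)]
      rw [← Units.val_pow_eq_pow_val, hm, Units.val_mk0]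
    refine ⟨m % N, Nat.mod_lt _ hNpos, hxe ▸ hxX, ?_⟩
    have h1 := hfapply (m % N)
    rw [← hxe, hfx] at h1
    exact (hpow _ _).mp h1
  -- cast of the difference expression
  have hDcast : ∀ a b : ℕ, b < N →
      (((a + N - b) % N : ℕ) : ZMod N) = (a : ZMod N) - (b : ZMod N) := by
    intro a b hb
    rw [ZMod.natCast_mod, Nat.cast_sub (by omega)]
    push_cast
    rw [ZMod.natCast_self]
    ring
  -- the main combination lemma: relating differences
  have hDrel : ∀ a b a' b' : ℕ, a < N → b < N → a' < N → b' < N →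
      ((a' : ZMod N) = (a : ZMod N) * (q : ZMod N) ^ i + (j : ZMod N)) →
      ((b' : ZMod N) = (b : ZMod N) * (q : ZMod N) ^ i + (j : ZMod N)) →
      (a' + N - b') % N = ((a + N - b) % N) * q ^ i % N := by
    intro a b a' b' ha hb ha' hb' hca hcb
    refine hinj _ _ (Nat.mod_lt _ hNpos) (Nat.mod_lt _ hNpos) ?_
    rw [hDcast a' b' hb', ZMod.natCast_mod]
    push_cast
    rw [hDcast a b hb, hca, hcb]
    ring
  have hne_iff : ∀ a b a' b' : ℕ, a < N → b < N → a' < N → b' < N →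
      ((a' : ZMod N) = (a : ZMod N) * (q : ZMod N) ^ i + (j : ZMod N)) →
      ((b' : ZMod N) = (b : ZMod N) * (q : ZMod N) ^ i + (j : ZMod N)) →
      (a' = b' ↔ a = b) := by
    intro a b a' b' ha hb ha' hb' hca hcb
    constructor
    · intro h
      apply hinj _ _ ha hb
      apply hcancel
      have : (a' : ZMod N) = (b' : ZMod N) := by rw [h]
      rw [hca, hcb] at this
      exact add_right_cancel this
    · intro h
      apply hinj _ _ ha' hb'
      rw [hca, hcb, h]
  -- final set equality
  ext r
  simp only [Set.mem_setOf_eq]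
  constructor
  · rintro ⟨e₁, he₁, e₂, he₂, hm₁, hm₂, hne, rfl⟩
    refine ⟨(e₁ * q ^ i + j) % N, Nat.mod_lt _ hNpos,
            (e₂ * q ^ i + j) % N, Nat.mod_lt _ hNpos, ?_, ?_, ?_, ?_⟩
    · rw [(hpow _ _).mpr (Nat.mod_modEq _ _)]; exact hmemY e₁ hm₁
    · rw [(hpow _ _).mpr (Nat.mod_modEq _ _)]; exact hmemY e₂ hm₂
    · have hc₁ : (((e₁ * q ^ i + j) % N : ℕ) : ZMod N)
          = (e₁ : ZMod N) * (q : ZMod N) ^ i + (j : ZMod N) := by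
        rw [ZMod.natCast_mod]; push_cast; ring
      have hc₂ : (((e₂ * q ^ i + j) % N : ℕ) : ZMod N)
          = (e₂ : ZMod N) * (q : ZMod N) ^ i + (j : ZMod N) := by
        rw [ZMod.natCast_mod]; push_cast; ring
      exact fun h => hne ((hne_iff e₁ e₂ _ _ he₁ he₂ (Nat.mod_lt _ hNpos)
        (Nat.mod_lt _ hNpos) hc₁ hc₂).mp h)
    · have hc₁ : (((e₁ * q ^ i + j) % N : ℕ) : ZMod N)
          = (e₁ : ZMod N) * (q : ZMod N) ^ i + (j : ZMod N) := by
        rw [ZMod.natCast_mod]; push_cast; ring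
      have hc₂ : (((e₂ * q ^ i + j) % N : ℕ) : ZMod N)
          = (e₂ : ZMod N) * (q : ZMod N) ^ i + (j : ZMod N) := by
        rw [ZMod.natCast_mod]; push_cast; ring
      rw [hDrel e₁ e₂ _ _ he₁ he₂ (Nat.mod_lt _ hNpos) (Nat.mod_lt _ hNpos) hc₁ hc₂]
      rw [rho_set_eq_aux q n N ((e₁ + N - e₂) % N) i hn hN1]
  · rintro ⟨e₁', he₁', e₂', he₂', hm₁, hm₂, hne, rfl⟩
    obtain ⟨e₁, he₁, hmX₁, hc₁⟩ := hmemX e₁' hm₁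
    obtain ⟨e₂, he₂, hmX₂, hc₂⟩ := hmemX e₂' hm₂
    have hz₁ : (e₁' : ZMod N) = (e₁ : ZMod N) * (q : ZMod N) ^ i + (j : ZMod N) := by
      have := (ZMod.natCast_eq_natCast_iff _ _ _).mpr hc₁
      push_cast at this; exact this
    have hz₂ : (e₂' : ZMod N) = (e₂ : ZMod N) * (q : ZMod N) ^ i + (j : ZMod N) := by
      have := (ZMod.natCast_eq_natCast_iff _ _ _).mpr hc₂
      push_cast at this; exact this
    refine ⟨e₁, he₁, e₂, he₂, hmX₁, hmX₂, ?_, ?_⟩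
    · exact fun h => hne ((hne_iff e₁ e₂ e₁' e₂' he₁ he₂ he₁' he₂' hz₁ hz₂).mpr h)
    · rw [hDrel e₁ e₂ e₁' e₂' he₁ he₂ he₁' he₂' hz₁ hz₂]
      rw [rho_set_eq_aux q n N ((e₁ + N - e₂) % N) i hn hN1]
end

section
/- Let k and n be coprime positive integers with k < n, and suppose there exists a q-Steiner system S_2[2,k,n] on the F_2-vector space F_{2^n} that is invariant under the Singer subgroup, i.e., invariant under the maps x ↦ c·x for all nonzero c ∈ F_{2^n}. Then there exists a (2^n − 1, 2^k − 1, 1) difference family over the cyclic group Z_{2^n−1}. -/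
set_option linter.unnecessarySimpa false
set_option synthInstance.maxHeartbeats 1000000
set_option maxHeartbeats 2000000

private lemma map_mulLeft_map (n : ℕ) (a b : GaloisField 2 n)
    (W : Submodule (ZMod 2) (GaloisField 2 n)) :
    Submodule.map (LinearMap.mulLeft (ZMod 2) a)
        (Submodule.map (LinearMap.mulLeft (ZMod 2) b) W)
      = Submodule.map (LinearMap.mulLeft (ZMod 2) (a * b)) W := by
  rw [LinearMap.mulLeft_mul, Submodule.map_comp]

private lemma map_mulLeft_one (n : ℕ) (W : Submodule (ZMod 2) (GaloisField 2 n)) :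
    Submodule.map (LinearMap.mulLeft (ZMod 2) (1 : GaloisField 2 n)) W = W := by
  rw [LinearMap.mulLeft_one, Submodule.map_id]

private lemma abstract_subfield_step (k n : ℕ) (hk : 0 < k) (hkn : k < n)
    (hco : Nat.Coprime k n)
    (W : Submodule (ZMod 2) (GaloisField 2 n))
    (hW : Module.finrank (ZMod 2) W = k)
    (c : GaloisField 2 n) (hc : c ≠ 0)
    (E : Subfield (GaloisField 2 n)) (hcE : c ∈ E)
    (hEW : ∀ x ∈ E, ∀ w ∈ W, x * w ∈ W) : c = 1 := by
  classical
  have hn : n ≠ 0 := by omega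
  have hcardF : Nat.card (GaloisField 2 n) = 2 ^ n := GaloisField.card 2 n hn
  haveI : Finite (GaloisField 2 n) :=
    (Nat.card_pos_iff.mp (by rw [hcardF]; positivity)).2
  haveI : Fintype (GaloisField 2 n) := Fintype.ofFinite _
  let W' : Submodule E (GaloisField 2 n) :=
  { carrier := (W : Set (GaloisField 2 n))
    add_mem' := fun ha hb => W.add_mem ha hb
    zero_mem' := W.zero_mem
    smul_mem' := by
      intro e x hx
      have he : (e : GaloisField 2 n) * x ∈ W := hEW _ e.2 x hx
      rwa [Subfield.smul_def, smul_eq_mul] }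
  haveI : Fintype E := Fintype.ofFinite _
  haveI : Fintype W := Fintype.ofFinite _
  haveI : Fintype W' := Fintype.ofFinite _
  have hcardW : Fintype.card W = 2 ^ k := by
    rw [Module.card_eq_pow_finrank (K := ZMod 2) (V := W), ZMod.card, hW]
  have hWW' : Fintype.card W' = Fintype.card W :=
    Fintype.card_congr (Equiv.subtypeEquivRight fun x => Iff.rfl)
  have hcardW' : Fintype.card W' = Fintype.card E ^ Module.finrank E W' :=
    Module.card_eq_pow_finrank (K := E) (V := W')
  have hcardF' : Fintype.card (GaloisField 2 n) = Fintype.card E ^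
      Module.finrank E (GaloisField 2 n) :=
    Module.card_eq_pow_finrank (K := E) (V := GaloisField 2 n)
  have hF2n : Fintype.card (GaloisField 2 n) = 2 ^ n := by
    rw [← Nat.card_eq_fintype_card, hcardF]
  have hWpow : Fintype.card E ^ Module.finrank E W' = 2 ^ k := by
    rw [← hcardW', hWW', hcardW]
  have hFpow : Fintype.card E ^ Module.finrank E (GaloisField 2 n) = 2 ^ n := by
    rw [← hcardF', hF2n]
  have hdW : Module.finrank E W' ≠ 0 := by
    intro h
    rw [h, pow_zero] at hWpow
    have : (2:ℕ) ^ k ≥ 2 := by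
      calc (2:ℕ) ^ k ≥ 2 ^ 1 := Nat.pow_le_pow_right (by norm_num) hk
      _ = 2 := by norm_num
    omega
  have hdvdk : Fintype.card E ∣ 2 ^ k := by
    rw [← hWpow]; exact dvd_pow_self _ hdW
  obtain ⟨e, he, hEe⟩ := (Nat.dvd_prime_pow Nat.prime_two).mp hdvdk
  have hek : e ∣ k := by
    have : (2:ℕ) ^ (e * Module.finrank E W') = 2 ^ k := by
      rw [pow_mul, ← hEe, hWpow]
    exact Dvd.intro _ (Nat.pow_right_injective (le_refl 2) this)
  have hdF : Module.finrank E (GaloisField 2 n) ≠ 0 := by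
    intro h
    rw [h, pow_zero] at hFpow
    have : (2:ℕ) ^ n ≥ 2 := by
      calc (2:ℕ) ^ n ≥ 2 ^ 1 := Nat.pow_le_pow_right (by norm_num) (by omega)
      _ = 2 := by norm_num
    omega
  have hen : e ∣ n := by
    have : (2:ℕ) ^ (e * Module.finrank E (GaloisField 2 n)) = 2 ^ n := by
      rw [pow_mul, ← hEe, hFpow]
    exact Dvd.intro _ (Nat.pow_right_injective (le_refl 2) this)
  have he1 : e = 1 := Nat.dvd_one.mp (hco ▸ Nat.dvd_gcd hek hen)
  have hE2 : Fintype.card E = 2 := by rw [hEe, he1, pow_one]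
  by_contra hc1
  have h01 : ((0 : E) : GaloisField 2 n) = 0 := rfl
  have h11 : ((1 : E) : GaloisField 2 n) = 1 := rfl
  have hset : ({(0 : E), 1, ⟨c, hcE⟩} : Finset E).card = 3 := by
    rw [Finset.card_insert_of_notMem, Finset.card_insert_of_notMem,
      Finset.card_singleton]
    · simp only [Finset.mem_singleton]
      intro h
      have h' : (1 : GaloisField 2 n) = c := congrArg Subtype.val h
      exact hc1 h'.symm
    · simp only [Finset.mem_insert, Finset.mem_singleton]
      rintro (h | h)
      · have h' : (0 : GaloisField 2 n) = 1 := congrArg Subtype.val h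
        exact one_ne_zero h'.symm
      · have h' : (0 : GaloisField 2 n) = c := congrArg Subtype.val h
        exact hc h'.symm
  have := Finset.card_le_univ ({(0 : E), 1, ⟨c, hcE⟩} : Finset E)
  rw [hset] at this
  have hle := this.trans (le_of_eq ((Finset.card_univ (α := ↥E)).trans hE2))
  omega

private lemma singer_stab_trivial (k n : ℕ) (hk : 0 < k) (hkn : k < n)
    (hco : Nat.Coprime k n)
    (W : Submodule (ZMod 2) (GaloisField 2 n))
    (hW : Module.finrank (ZMod 2) W = k)
    (c : GaloisField 2 n) (hc : c ≠ 0)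
    (hmap : Submodule.map (LinearMap.mulLeft (ZMod 2) c) W = W) : c = 1 := by
  classical
  have hn : n ≠ 0 := by omega
  have hcardF : Nat.card (GaloisField 2 n) = 2 ^ n := GaloisField.card 2 n hn
  haveI : Finite (GaloisField 2 n) :=
    (Nat.card_pos_iff.mp (by rw [hcardF]; positivity)).2
  have hmul : ∀ x : GaloisField 2 n,
      Submodule.map (LinearMap.mulLeft (ZMod 2) x) W = W → ∀ w ∈ W, x * w ∈ W := by
    intro x hx w hw
    have := Submodule.mem_map_of_mem (f := LinearMap.mulLeft (ZMod 2) x) hw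
    rwa [hx, LinearMap.mulLeft_apply] at this
  refine abstract_subfield_step k n hk hkn hco W hW c hc
    { carrier := {x : GaloisField 2 n | ∀ w ∈ W, x * w ∈ W}
      mul_mem' := by
        intro a b ha hb w hw
        rw [mul_assoc]; exact ha _ (hb w hw)
      one_mem' := by intro w hw; simpa using hw
      add_mem' := by
        intro a b ha hb w hw
        rw [add_mul]; exact W.add_mem (ha w hw) (hb w hw)
      zero_mem' := by intro w hw; simpa using W.zero_mem
      neg_mem' := by
        intro a ha w hw
        rw [neg_mul]; exact W.neg_mem (ha w hw)
      inv_mem' := by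
        intro a ha
        rcases eq_or_ne a 0 with rfl | ha0
        · intro w hw; simpa using W.zero_mem
        · intro w hw
          have hinj : Function.Injective (fun u : W => (⟨a * u, ha _ u.2⟩ : W)) := by
            intro u u' huu
            have : a * (u : GaloisField 2 n) = a * u' := congrArg Subtype.val huu
            exact Subtype.ext (mul_left_cancel₀ ha0 this)
          obtain ⟨u, hu⟩ := Finite.surjective_of_injective hinj ⟨w, hw⟩
          have hu' : a * (u : GaloisField 2 n) = w := congrArg Subtype.val hu
          have : a⁻¹ * w = u := by rw [← hu', inv_mul_cancel_left₀ ha0]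
          rw [this]; exact u.2 }
    (hmul c hmap) (fun x hx w hw => hx w hw)

/-- If `k` and `n` are coprime with `0 < k < n` and there exists a q-Steiner system
`S₂[2, k, n]` on the `ZMod 2`-vector space `GaloisField 2 n` invariant under the Singer
subgroup (the maps `x ↦ c * x` for nonzero `c`), then there exists a
`(2^n - 1, 2^k - 1, 1)` difference family over `ZMod (2^n - 1)`: a collection of
`(2^k - 1)`-element subsets in which every nonzero element occurs exactly once as a
difference. -/
theorem difference_family_of_singer_invariant_steiner (k n : ℕ)
    (hk : 0 < k) (hkn : k < n) (hco : Nat.Coprime k n)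
    (S : Set (Submodule (ZMod 2) (GaloisField 2 n)))
    (hdim : ∀ W ∈ S, Module.finrank (ZMod 2) W = k)
    (hcov : ∀ T : Submodule (ZMod 2) (GaloisField 2 n), Module.finrank (ZMod 2) T = 2 →
      ∃! W, W ∈ S ∧ T ≤ W)
    (hinv : ∀ c : GaloisField 2 n, c ≠ 0 → ∀ W ∈ S,
      Submodule.map (LinearMap.mulLeft (ZMod 2) c) W ∈ S) :
    ∃ (s : ℕ) (B : Fin s → Finset (ZMod (2 ^ n - 1))),
      (∀ i, (B i).card = 2 ^ k - 1) ∧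
      (∀ d : ZMod (2 ^ n - 1), d ≠ 0 →
        (∑ i, ((B i ×ˢ B i).filter fun p => p.1 ≠ p.2 ∧ p.1 - p.2 = d).card) = 1) := by
  classical
  have hn : n ≠ 0 := by omega
  have hcardF : Nat.card (GaloisField 2 n) = 2 ^ n := GaloisField.card 2 n hn
  haveI : Finite (GaloisField 2 n) :=
    (Nat.card_pos_iff.mp (by rw [hcardF]; positivity)).2
  haveI : Fintype (GaloisField 2 n) := Fintype.ofFinite _
  have h2n : (4:ℕ) ≤ 2 ^ n := by
    calc (4:ℕ) = 2 ^ 2 := by norm_num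
    _ ≤ 2 ^ n := Nat.pow_le_pow_right (by norm_num) (by omega)
  haveI : NeZero (2 ^ n - 1) := ⟨by omega⟩
  have hcardU : Fintype.card (GaloisField 2 n)ˣ = 2 ^ n - 1 := by
    rw [Fintype.card_units, ← Nat.card_eq_fintype_card, hcardF]
  obtain ⟨g, hg⟩ := IsCyclic.exists_generator (α := (GaloisField 2 n)ˣ)
  have horder : orderOf g = 2 ^ n - 1 := by
    rw [orderOf_eq_card_of_forall_mem_zpowers hg, Nat.card_eq_fintype_card, hcardU]
  -- discrete exponential and logarithm
  let exp : ZMod (2 ^ n - 1) → (GaloisField 2 n)ˣ := fun a => g ^ a.val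
  have hexp_add : ∀ a b, exp (a + b) = exp a * exp b := by
    intro a b
    show g ^ (a + b).val = g ^ a.val * g ^ b.val
    rw [← pow_add, ZMod.val_add]
    refine pow_eq_pow_iff_modEq.mpr ?_
    rw [horder]
    exact Nat.mod_modEq _ _
  have hexp_inj : Function.Injective exp := by
    intro a b hab
    have h1 := pow_eq_pow_iff_modEq.mp hab
    rw [horder] at h1
    have h2 : a.val % (2 ^ n - 1) = b.val % (2 ^ n - 1) := h1
    rw [Nat.mod_eq_of_lt (ZMod.val_lt a), Nat.mod_eq_of_lt (ZMod.val_lt b)] at h2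
    exact ZMod.val_injective _ h2
  have hexp_bij : Function.Bijective exp :=
    (Fintype.bijective_iff_injective_and_card exp).mpr
      ⟨hexp_inj, by rw [ZMod.card, hcardU]⟩
  let eqv : ZMod (2 ^ n - 1) ≃ (GaloisField 2 n)ˣ := Equiv.ofBijective exp hexp_bij
  let log : (GaloisField 2 n)ˣ → ZMod (2 ^ n - 1) := eqv.symm
  have hexp_log : ∀ x, exp (log x) = x := fun x => eqv.apply_symm_apply x
  have hlog_inj : Function.Injective log := eqv.symm.injective
  have hlog_mul : ∀ (a : ZMod (2 ^ n - 1)) (x : (GaloisField 2 n)ˣ),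
      log (exp a * x) = a + log x := by
    intro a x
    apply hexp_inj
    show exp (log (exp a * x)) = exp (a + log x)
    rw [hexp_log, hexp_add, hexp_log]
  have hexp_zero : exp 0 = 1 := by
    show g ^ (0 : ZMod (2 ^ n - 1)).val = 1
    rw [ZMod.val_zero, pow_zero]
  -- the setoid of Singer orbits on S
  haveI : Finite (Submodule (ZMod 2) (GaloisField 2 n)) :=
    Finite.of_injective (fun W => (W : Set (GaloisField 2 n))) SetLike.coe_injective
  haveI : Fintype ↥S := Fintype.ofFinite _
  let r : ↥S → ↥S → Prop := fun W W' =>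
    ∃ u : (GaloisField 2 n)ˣ,
      Submodule.map (LinearMap.mulLeft (ZMod 2) (u : GaloisField 2 n)) W.1 = W'.1
  let sd : Setoid ↥S :=
    ⟨r, ⟨fun W => ⟨1, by rw [Units.val_one, map_mulLeft_one]⟩,
      fun {W W'} h => by
        obtain ⟨u, hu⟩ := h
        refine ⟨u⁻¹, ?_⟩
        rw [← hu, map_mulLeft_map]
        have : ((u⁻¹ : (GaloisField 2 n)ˣ) : GaloisField 2 n) * u = 1 := by
          rw [← Units.val_mul, inv_mul_cancel, Units.val_one]
        rw [this, map_mulLeft_one],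
      fun {W W' W''} h h' => by
        obtain ⟨u, hu⟩ := h
        obtain ⟨u', hu'⟩ := h'
        refine ⟨u' * u, ?_⟩
        rw [Units.val_mul, ← map_mulLeft_map, hu, hu']⟩⟩
  haveI : Fintype (Quotient sd) := Quotient.fintype sd
  -- the log image of a block
  let L : Submodule (ZMod 2) (GaloisField 2 n) → Finset (ZMod (2 ^ n - 1)) :=
    fun W => (Finset.univ.filter
      fun x : (GaloisField 2 n)ˣ => (x : GaloisField 2 n) ∈ W).image log
  have hLcard : ∀ W ∈ S, (L W).card = 2 ^ k - 1 := by
    intro W hW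
    show ((Finset.univ.filter
      fun x : (GaloisField 2 n)ˣ => (x : GaloisField 2 n) ∈ W).image log).card = 2 ^ k - 1
    rw [Finset.card_image_of_injective _ hlog_inj, ← Fintype.card_subtype]
    have e1 : {x : (GaloisField 2 n)ˣ // (x : GaloisField 2 n) ∈ W} ≃ {w : W // ¬ (w = 0)} :=
      { toFun := fun x => ⟨⟨x.1, x.2⟩, fun h => x.1.ne_zero (congrArg Subtype.val h)⟩
        invFun := fun w => ⟨Units.mk0 w.1.1 (fun h => w.2 (Subtype.ext h)), w.1.2⟩
        left_inv := fun x => Subtype.ext (Units.ext rfl)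
        right_inv := fun w => Subtype.ext (Subtype.ext rfl) }
    rw [Fintype.card_congr e1, Fintype.card_subtype_compl,
      Fintype.card_subtype_eq (0 : W)]
    have : Fintype.card W = 2 ^ k := by
      rw [Module.card_eq_pow_finrank (K := ZMod 2) (V := W), ZMod.card, hdim W hW]
    rw [this]
  -- choose the blocks
  refine ⟨Fintype.card (Quotient sd),
    fun i => L (((Fintype.equivFin (Quotient sd)).symm i).out.1),
    fun i => hLcard _ ((Fintype.equivFin (Quotient sd)).symm i).out.2, ?_⟩
  intro d hd
  -- the unit c = exp d
  have hc1 : exp d ≠ 1 := fun h => hd (hexp_inj (h.trans hexp_zero.symm))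
  have hcF1 : ((exp d : (GaloisField 2 n)ˣ) : GaloisField 2 n) ≠ 1 := by
    intro h
    exact hc1 (Units.ext (by rw [h, Units.val_one]))
  -- the 2-dimensional subspace spanned by 1 and c
  have hind : LinearIndependent (ZMod 2)
      ![(1 : GaloisField 2 n), ((exp d : (GaloisField 2 n)ˣ) : GaloisField 2 n)] := by
    rw [LinearIndependent.pair_iff]
    intro s t hst
    have hcases : ∀ u : ZMod 2, u = 0 ∨ u = 1 := by decide
    rcases hcases s with rfl | rfl <;> rcases hcases t with rfl | rfl
    · exact ⟨rfl, rfl⟩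
    · exfalso
      rw [zero_smul, one_smul, zero_add] at hst
      exact (exp d).ne_zero hst
    · exfalso
      rw [one_smul, zero_smul, add_zero] at hst
      exact one_ne_zero hst
    · exfalso
      rw [one_smul, one_smul] at hst
      have : ((exp d : (GaloisField 2 n)ˣ) : GaloisField 2 n) = -1 :=
        eq_neg_of_add_eq_zero_right hst
      rw [CharTwo.neg_eq] at this
      exact hcF1 this
  have hT2 : Module.finrank (ZMod 2) (Submodule.span (ZMod 2)
      (Set.range ![(1 : GaloisField 2 n),
        ((exp d : (GaloisField 2 n)ˣ) : GaloisField 2 n)])) = 2 := by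
    rw [finrank_span_eq_card hind, Fintype.card_fin]
  obtain ⟨W₀, ⟨hW₀S, hTW₀⟩, hW₀uniq⟩ := hcov _ hT2
  have h1W₀ : (1 : GaloisField 2 n) ∈ W₀ := hTW₀ (Submodule.subset_span ⟨0, rfl⟩)
  have hcW₀ : ((exp d : (GaloisField 2 n)ˣ) : GaloisField 2 n) ∈ W₀ :=
    hTW₀ (Submodule.subset_span ⟨1, rfl⟩)
  -- any block containing a pair (y, c*y) maps back to W₀ under y⁻¹
  have hblock : ∀ W' : Submodule (ZMod 2) (GaloisField 2 n), W' ∈ S →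
      ∀ y : (GaloisField 2 n)ˣ, (y : GaloisField 2 n) ∈ W' →
      ((exp d : (GaloisField 2 n)ˣ) : GaloisField 2 n) * y ∈ W' →
      Submodule.map (LinearMap.mulLeft (ZMod 2)
        ((y⁻¹ : (GaloisField 2 n)ˣ) : GaloisField 2 n)) W' = W₀ := by
    intro W' hW' y hy hcy
    refine hW₀uniq _ ⟨hinv _ (Units.ne_zero y⁻¹) W' hW', ?_⟩
    rw [Submodule.span_le]
    rintro x ⟨i, rfl⟩
    fin_cases i
    · refine Submodule.mem_map.mpr ⟨y, hy, ?_⟩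
      rw [LinearMap.mulLeft_apply]
      show ((y⁻¹ : (GaloisField 2 n)ˣ) : GaloisField 2 n) * y = 1
      rw [← Units.val_mul, inv_mul_cancel, Units.val_one]
    · refine Submodule.mem_map.mpr ⟨_, hcy, ?_⟩
      rw [LinearMap.mulLeft_apply]
      show ((y⁻¹ : (GaloisField 2 n)ˣ) : GaloisField 2 n)
          * (((exp d : (GaloisField 2 n)ˣ) : GaloisField 2 n) * y)
          = ((exp d : (GaloisField 2 n)ˣ) : GaloisField 2 n)
      rw [mul_comm ((exp d : (GaloisField 2 n)ˣ) : GaloisField 2 n) (y : GaloisField 2 n),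
        ← mul_assoc, ← Units.val_mul, inv_mul_cancel, Units.val_one, one_mul]
  have hfree : ∀ u : (GaloisField 2 n)ˣ,
      Submodule.map (LinearMap.mulLeft (ZMod 2) (u : GaloisField 2 n)) W₀ = W₀ → u = 1 := by
    intro u hu
    have := singer_stab_trivial k n hk hkn hco W₀ (hdim _ hW₀S) u u.ne_zero hu
    exact Units.ext (by rw [this, Units.val_one])
  -- the orbit of W₀
  -- pair count equals the count of y with y ∈ W and c*y ∈ W
  have hpair : ∀ W : Submodule (ZMod 2) (GaloisField 2 n),
      ((L W ×ˢ L W).filter fun p => p.1 ≠ p.2 ∧ p.1 - p.2 = d).card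
      = (Finset.univ.filter fun y : (GaloisField 2 n)ˣ =>
          (y : GaloisField 2 n) ∈ W ∧
          ((exp d : (GaloisField 2 n)ˣ) : GaloisField 2 n) * y ∈ W).card := by
    intro W
    refine (Finset.card_bij (fun y _ => (log (exp d * y), log y)) ?_ ?_ ?_).symm
    · intro y hy
      rw [Finset.mem_filter] at hy
      obtain ⟨-, hy1, hy2⟩ := hy
      have hdiff : log (exp d * y) - log y = d := by
        rw [hlog_mul, add_sub_cancel_right]
      refine Finset.mem_filter.mpr ⟨Finset.mem_product.mpr ⟨?_, ?_⟩, ?_, hdiff⟩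
      · refine Finset.mem_image_of_mem log (Finset.mem_filter.mpr ⟨Finset.mem_univ _, ?_⟩)
        rw [Units.val_mul]; exact hy2
      · exact Finset.mem_image_of_mem log (Finset.mem_filter.mpr ⟨Finset.mem_univ _, hy1⟩)
      · intro h
        apply hd
        have h' : log (exp d * y) = log y := h
        rw [← hdiff, h', sub_self]
    · intro y1 h1 y2 h2 h
      exact hlog_inj (congrArg Prod.snd h)
    · rintro ⟨a, b⟩ hp
      rw [Finset.mem_filter, Finset.mem_product] at hp
      obtain ⟨⟨ha, hb⟩, hne, hdiff⟩ := hp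
      obtain ⟨x, hx, hxlog⟩ := Finset.mem_image.mp ha
      obtain ⟨y, hy, hylog⟩ := Finset.mem_image.mp hb
      rw [Finset.mem_filter] at hx hy
      have hxy : x = exp d * y := by
        apply hlog_inj
        rw [hlog_mul, hylog, hxlog]
        rw [← hdiff]
        ring
      refine ⟨y, Finset.mem_filter.mpr ⟨Finset.mem_univ _, hy.2, ?_⟩, ?_⟩
      · rw [← Units.val_mul, ← hxy]; exact hx.2
      · have : log (exp d * y) = a := by rw [← hxy, hxlog]
        rw [this, hylog]
  -- now compute the sum over orbit representatives
  have hsum_rw : ∀ i : Fin (Fintype.card (Quotient sd)),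
      ((L (((Fintype.equivFin (Quotient sd)).symm i).out.1) ×ˢ
        L (((Fintype.equivFin (Quotient sd)).symm i).out.1)).filter
        fun p => p.1 ≠ p.2 ∧ p.1 - p.2 = d).card
      = (Finset.univ.filter fun y : (GaloisField 2 n)ˣ =>
          (y : GaloisField 2 n) ∈ ((Fintype.equivFin (Quotient sd)).symm i).out.1 ∧
          ((exp d : (GaloisField 2 n)ˣ) : GaloisField 2 n) * y ∈
            ((Fintype.equivFin (Quotient sd)).symm i).out.1).card :=
    fun i => hpair _
  rw [Finset.sum_congr rfl fun i _ => hsum_rw i]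
  rw [Equiv.sum_comp (Fintype.equivFin (Quotient sd)).symm
    (fun o : Quotient sd => (Finset.univ.filter fun y : (GaloisField 2 n)ˣ =>
      (y : GaloisField 2 n) ∈ o.out.1 ∧
      ((exp d : (GaloisField 2 n)ˣ) : GaloisField 2 n) * y ∈ o.out.1).card)]
  -- sum over the quotient is 1
  have horbit : ∀ (o : Quotient sd) (y : (GaloisField 2 n)ˣ),
      (y : GaloisField 2 n) ∈ o.out.1 →
      ((exp d : (GaloisField 2 n)ˣ) : GaloisField 2 n) * y ∈ o.out.1 →
      o = Quotient.mk sd ⟨W₀, hW₀S⟩ ∧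
      Submodule.map (LinearMap.mulLeft (ZMod 2) (y : GaloisField 2 n)) W₀ = o.out.1 := by
    intro o y hy hcy
    have h0 := hblock _ o.out.2 y hy hcy
    have hmapy : Submodule.map (LinearMap.mulLeft (ZMod 2) (y : GaloisField 2 n)) W₀
        = o.out.1 := by
      rw [← h0, map_mulLeft_map]
      have : (y : GaloisField 2 n) * ((y⁻¹ : (GaloisField 2 n)ˣ) : GaloisField 2 n) = 1 := by
        rw [← Units.val_mul, mul_inv_cancel, Units.val_one]
      rw [this, map_mulLeft_one]
    have hrel : r ⟨W₀, hW₀S⟩ o.out := ⟨y, hmapy⟩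
    refine ⟨?_, hmapy⟩
    calc o = Quotient.mk sd o.out := (Quotient.out_eq o).symm
      _ = Quotient.mk sd ⟨W₀, hW₀S⟩ := (Quotient.sound hrel).symm
  refine (Finset.sum_eq_single (Quotient.mk sd ⟨W₀, hW₀S⟩) ?_ ?_).trans ?_
  · -- other orbits contribute 0
    intro o _ ho
    rw [Finset.card_eq_zero, Finset.filter_eq_empty_iff]
    intro y _
    rintro ⟨hy, hcy⟩
    exact ho (horbit o y hy hcy).1
  · intro h
    exact absurd (Finset.mem_univ _) h
  · -- the count at the orbit of W₀ is 1
    have hrel : r (Quotient.mk sd ⟨W₀, hW₀S⟩).out ⟨W₀, hW₀S⟩ :=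
      Quotient.exact (s := sd) (Quotient.out_eq (Quotient.mk sd ⟨W₀, hW₀S⟩))
    obtain ⟨u', hu'⟩ := sd.iseqv.symm hrel
    have : (Finset.univ.filter fun y : (GaloisField 2 n)ˣ =>
        (y : GaloisField 2 n) ∈ (Quotient.mk sd ⟨W₀, hW₀S⟩).out.1 ∧
        ((exp d : (GaloisField 2 n)ˣ) : GaloisField 2 n) * y ∈
          (Quotient.mk sd ⟨W₀, hW₀S⟩).out.1) = {u'} := by
      ext y
      simp only [Finset.mem_filter, Finset.mem_univ, true_and, Finset.mem_singleton]
      constructor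
      · rintro ⟨hy, hcy⟩
        obtain ⟨-, hmapy⟩ := horbit _ y hy hcy
        have h1 : Submodule.map (LinearMap.mulLeft (ZMod 2)
            ((u'⁻¹ * y : (GaloisField 2 n)ˣ) : GaloisField 2 n)) W₀ = W₀ := by
          rw [Units.val_mul, ← map_mulLeft_map, hmapy, ← hu', map_mulLeft_map]
          have : ((u'⁻¹ : (GaloisField 2 n)ˣ) : GaloisField 2 n) * u' = 1 := by
            rw [← Units.val_mul, inv_mul_cancel, Units.val_one]
          rw [this, map_mulLeft_one]
        have := hfree _ h1
        have := inv_mul_eq_one.mp this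
        exact this.symm ▸ rfl
      · rintro rfl
        constructor
        · rw [← hu']
          refine Submodule.mem_map.mpr ⟨1, h1W₀, ?_⟩
          rw [LinearMap.mulLeft_apply, mul_one]
        · rw [← hu']
          refine Submodule.mem_map.mpr ⟨_, hcW₀, ?_⟩
          rw [LinearMap.mulLeft_apply, mul_comm]
    rw [this, Finset.card_singleton]
end

section
/- Let q be a prime, let k and n be coprime positive integers with k < n, and suppose there exists a q-Steiner system S_q[2,k,n] on the F_q-vector space F_{q^n} that is invariant under the Singer subgroup, i.e., invariant under the maps x ↦ c·x for all nonzero c ∈ F_{q^n}. Then there exists a ((q^n − 1)/(q − 1), (q^k − 1)/(q − 1), 1) difference family over the cyclic group Z_{(q^n−1)/(q−1)}. -/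
/-!
Let `F = 𝔽_{q^n}` and `v = (q^n - 1)/(q - 1)`. The cyclic group `Fˣ` has a surjection `ψ` onto
`ZMod v` with kernel `𝔽_qˣ`, so `ψ` identifies `ZMod v` with the points of the projective space
of `F`. Every Singer orbit of the Steiner system contributes one base block: the image under `ψ`
of the nonzero vectors of a representative `W`, of size `(q^k - 1)/(q - 1)`.

An element of `Fˣ` fixing `W` has order dividing `q^k - 1` and `q^n - 1`, hence `q - 1` since
`k` and `n` are coprime: the stabiliser of a block is `𝔽_qˣ`. Now let `d ≠ 0` and `ψ δ = d`.
If `x, y ∈ W` satisfy `ψ x - ψ y = d`, then `y⁻¹ W` contains the line `⟨1, δ⟩`, so it is the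
unique block `W₀` through that line; hence only the orbit of `W₀` contributes, and there `y` is
determined up to the stabiliser, i.e. `ψ y` is determined.
-/

open Finset Module Pointwise

section DifferenceFamily

variable {A : Type*} [AddGroup A] [DecidableEq A]

def differencePairs (B : Finset A) (d : A) : Finset (A × A) :=
  {p ∈ B ×ˢ B | p.1 ≠ p.2 ∧ p.1 - p.2 = d}

def IsDifferenceFamily {ι : Type*} [Fintype ι] (B : ι → Finset A) (m l : ℕ) : Prop :=
  (∀ i, #(B i) = m) ∧ ∀ d ≠ 0, ∑ i, #(differencePairs (B i) d) = l

theorem IsDifferenceFamily.comp_equiv {ι ι' : Type*} [Fintype ι] [Fintype ι'] {B : ι → Finset A}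
    {m l : ℕ} (h : IsDifferenceFamily B m l) (e : ι' ≃ ι) : IsDifferenceFamily (B ∘ e) m l :=
  ⟨fun i => h.1 (e i), fun d hd => (e.sum_comp fun i => #(differencePairs (B i) d)).trans (h.2 d hd)⟩

end DifferenceFamily

theorem IsCyclic.exists_surjective_ker_eq_powMonoidHom_ker {G : Type*} [CommGroup G] [Finite G]
    [IsCyclic G] {v m : ℕ} (h : Nat.card G = v * m) :
    ∃ ψ : G →* Multiplicative (ZMod v), Function.Surjective ψ ∧ ψ.ker = (powMonoidHom m).ker := by
  have hm : 0 < m := Nat.pos_of_mul_pos_left (h ▸ Nat.card_pos)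
  have hcard : Nat.card (powMonoidHom m : G →* G).range = Nat.card (Multiplicative (ZMod v)) := by
    rw [IsCyclic.card_powMonoidHom_range, h, Nat.gcd_mul_left_left, Nat.mul_div_cancel _ hm]
    exact (Nat.card_zmod v).symm
  let e := mulEquivOfCyclicCardEq hcard
  refine ⟨(e : _ →* _).comp (powMonoidHom m : G →* G).rangeRestrict,
    e.surjective.comp (MonoidHom.rangeRestrict_surjective _), ?_⟩
  ext x
  simp [MonoidHom.mem_ker]

theorem MonoidHom.toAdd_apply_eq_iff {G A : Type*} [Group G] [AddGroup A]
    (ψ : G →* Multiplicative A) {x y : G} :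
    (ψ x).toAdd = (ψ y).toAdd ↔ y⁻¹ * x ∈ ψ.ker :=
  Multiplicative.toAdd.injective.eq_iff.trans ψ.eq_iff

theorem Finset.card_image_mul_natCard_of_fiber_eq_coset {G B : Type*} [Group G] [DecidableEq B]
    (H : Subgroup G) (f : G → B) (hf : ∀ x y, f x = f y ↔ y⁻¹ * x ∈ H) {T : Finset G}
    (hT : ∀ x ∈ T, ∀ h ∈ H, x * h ∈ T) :
    #(T.image f) * Nat.card H = #T := by
  rw [card_eq_sum_card_image f T, sum_const_nat]
  intro b hb
  obtain ⟨x, hx, rfl⟩ := mem_image.1 hb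
  rw [← Nat.card_eq_finsetCard]
  exact Nat.card_congr
    { toFun := fun y => ⟨x⁻¹ * y, (hf _ _).1 (mem_filter.1 y.2).2⟩
      invFun := fun h => ⟨x * h, mem_filter.2 ⟨hT x hx h h.2, (hf _ _).2 (by simp)⟩⟩
      left_inv := fun y => by simp
      right_inv := fun h => by simp }

theorem pow_card_eq_one_of_forall_mul_mem {G : Type*} [CommGroup G] [DecidableEq G] {T : Finset G}
    {u : G} (h : ∀ x ∈ T, u * x ∈ T) : u ^ #T = 1 := by
  have himage : T.image (u * ·) = T :=
    eq_of_subset_of_card_le (image_subset_iff.2 h)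
      (card_image_of_injective _ (mul_right_injective u)).ge
  have hprod : u ^ #T * ∏ x ∈ T, x = ∏ x ∈ T, x := calc
    u ^ #T * ∏ x ∈ T, x = ∏ x ∈ T, u * x := by rw [prod_mul_distrib, prod_const]
    _ = ∏ x ∈ T.image (u * ·), x :=
      (prod_image (f := fun x => x) fun x _ y _ => mul_left_cancel).symm
    _ = ∏ x ∈ T, x := by rw [himage]
  exact mul_eq_right.1 hprod

section ScalarUnits

variable (K F : Type*) [Field K] [DivisionRing F] [Algebra K F]

def scalarUnits : Subgroup Fˣ := (Units.map (algebraMap K F).toMonoidHom).range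

variable {K F}

theorem mem_scalarUnits_iff {x : Fˣ} :
    x ∈ scalarUnits K F ↔ (x : F) ∈ Set.range (algebraMap K F) := by
  constructor
  · rintro ⟨c, rfl⟩
    exact ⟨c, rfl⟩
  · rintro ⟨c, hc⟩
    have hc0 : c ≠ 0 := by rintro rfl; exact x.ne_zero (by simpa using hc.symm)
    exact ⟨Units.mk0 c hc0, Units.ext hc⟩

theorem natCard_scalarUnits [Fintype K] : Nat.card (scalarUnits K F) = Fintype.card K - 1 := by
  rw [scalarUnits, ← Nat.card_congr (MonoidHom.ofInjective
    (Units.map_injective (algebraMap K F).injective)).toEquiv, Nat.card_units,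
    Nat.card_eq_fintype_card]

theorem Submodule.mul_mem_of_mem_scalarUnits {W : Submodule K F} {x : Fˣ}
    (hx : x ∈ scalarUnits K F) {z : F} (hz : z ∈ W) : (x : F) * z ∈ W := by
  obtain ⟨c, hc⟩ := mem_scalarUnits_iff.1 hx
  rw [← hc, ← Algebra.smul_def]
  exact W.smul_mem c hz

theorem Submodule.mem_inv_smul_iff {W : Submodule K F} {y : Fˣ} {z : F} :
    z ∈ y⁻¹ • W ↔ (y : F) * z ∈ W := by
  rw [Units.smul_def, Submodule.mem_smul_pointwise_iff_exists]
  constructor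
  · rintro ⟨b, hb, rfl⟩
    simpa [smul_eq_mul] using hb
  · exact fun h => ⟨y * z, h, by simp [smul_eq_mul]⟩

theorem finrank_span_one_pair {δ : F} (hδ : δ ∉ Set.range (algebraMap K F)) :
    finrank K (Submodule.span K {1, δ}) = 2 := by
  have hli : LinearIndependent K ![1, δ] :=
    (LinearIndependent.pair_iff' one_ne_zero).2 fun c hc =>
      hδ ⟨c, by rwa [Algebra.smul_def, mul_one] at hc⟩
  rw [← Matrix.range_cons_cons_empty _ _ ![]]
  simp [finrank_span_eq_card hli]

theorem exists_mem_iff_one_mem_and_mem_of_steiner (S : Set (Submodule K F))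
    (hcov : ∀ T : Submodule K F, finrank K T = 2 → ∃! W, W ∈ S ∧ T ≤ W) {δ : F}
    (hδ : δ ∉ Set.range (algebraMap K F)) :
    ∃ W₀ ∈ S, ∀ W ∈ S, (1 : F) ∈ W ∧ δ ∈ W ↔ W = W₀ := by
  obtain ⟨W₀, ⟨hW₀, hle⟩, huniq⟩ := hcov _ (finrank_span_one_pair hδ)
  simp only [Submodule.span_le, Set.insert_subset_iff, Set.singleton_subset_iff,
    SetLike.mem_coe] at hle huniq
  exact ⟨W₀, hW₀, fun W hW => ⟨fun h => huniq W ⟨hW, h⟩, by rintro rfl; exact hle⟩⟩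

end ScalarUnits

section FiniteField

variable {K F : Type*} [Field K] [Fintype K] [Field F] [Algebra K F]

theorem powMonoidHom_card_sub_one_ker_eq_scalarUnits :
    (powMonoidHom (Fintype.card K - 1) : Fˣ →* Fˣ).ker = scalarUnits K F := by
  have : NeZero (Fintype.card K - 1) := ⟨by have := Fintype.one_lt_card (α := K); omega⟩
  have : Finite (powMonoidHom (Fintype.card K - 1) : Fˣ →* Fˣ).ker :=
    inferInstanceAs (Finite (rootsOfUnity _ F))
  refine (Subgroup.eq_of_le_of_card_ge ?_ ?_).symm
  · rintro _ ⟨c, rfl⟩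
    ext
    simp only [powMonoidHom_apply, Units.val_pow_eq_pow_val, Units.coe_map, Units.val_one]
    rw [← map_pow, FiniteField.pow_card_sub_one_eq_one _ c.ne_zero, map_one]
  · rw [natCard_scalarUnits]
    exact card_rootsOfUnity _ _

variable [Fintype F] [DecidableEq F]

open Classical in
noncomputable def Submodule.unitsFinset (W : Submodule K F) : Finset Fˣ := {x | (x : F) ∈ W}

omit [Fintype K] in
@[simp]
theorem Submodule.mem_unitsFinset {W : Submodule K F} {x : Fˣ} :
    x ∈ W.unitsFinset ↔ (x : F) ∈ W := by
  simp [unitsFinset]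

theorem Submodule.card_unitsFinset (W : Submodule K F) :
    #W.unitsFinset = Fintype.card K ^ finrank K W - 1 := by
  classical
  have hmap : W.unitsFinset.map ⟨Units.val, Units.val_injective⟩ =
      ({z | z ∈ W} : Finset F).erase 0 := by
    ext z
    simp only [Finset.mem_map, mem_unitsFinset, Function.Embedding.coeFn_mk, mem_erase,
      mem_filter, mem_univ, true_and]
    exact ⟨fun ⟨x, hx, hxz⟩ => hxz ▸ ⟨x.ne_zero, hx⟩, fun ⟨hz, hzW⟩ => ⟨Units.mk0 z hz, hzW, rfl⟩⟩
  rw [← card_map, hmap, card_erase_of_mem (by simp), ← Fintype.card_subtype,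
    ← Nat.card_eq_fintype_card, Module.natCard_eq_pow_finrank (K := K), Nat.card_eq_fintype_card]

theorem Submodule.mem_scalarUnits_of_smul_le {W : Submodule K F}
    (hco : (finrank K W).Coprime (finrank K F)) {u : Fˣ} (hu : u • W ≤ W) :
    u ∈ scalarUnits K F := by
  set q := Fintype.card K
  have hW : u ^ (q ^ finrank K W - 1) = 1 := by
    rw [← W.card_unitsFinset]
    refine pow_card_eq_one_of_forall_mul_mem fun x hx => ?_
    exact mem_unitsFinset.2 (hu (smul_mem_pointwise_smul _ u _ (mem_unitsFinset.1 hx)))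
  have hF : u ^ (q ^ finrank K F - 1) = 1 := by
    rw [← card_eq_pow_finrank, ← Fintype.card_units]
    exact pow_card_eq_one
  have hgcd : q - 1 = (q ^ finrank K W - 1).gcd (q ^ finrank K F - 1) := by
    rw [Nat.pow_sub_one_gcd_pow_sub_one, hco.gcd_eq_one, pow_one]
  rw [← powMonoidHom_card_sub_one_ker_eq_scalarUnits, MonoidHom.mem_ker, powMonoidHom_apply,
    ← orderOf_dvd_iff_pow_eq_one, hgcd]
  exact Nat.dvd_gcd (orderOf_dvd_of_pow_eq_one hW) (orderOf_dvd_of_pow_eq_one hF)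

end FiniteField

section SingerBlock

variable {K F A : Type*} [Field K] [Field F] [Fintype F] [DecidableEq F] [Algebra K F]
  [AddCommGroup A] [DecidableEq A] {ψ : Fˣ →* Multiplicative A}

noncomputable def singerBlock (ψ : Fˣ →* Multiplicative A) (W : Submodule K F) : Finset A :=
  W.unitsFinset.image fun x => (ψ x).toAdd

theorem card_singerBlock [Fintype K] (hψ : ψ.ker = scalarUnits K F) (W : Submodule K F) :
    #(singerBlock ψ W) = (Fintype.card K ^ finrank K W - 1) / (Fintype.card K - 1) := by
  have h := W.unitsFinset.card_image_mul_natCard_of_fiber_eq_coset (scalarUnits K F) _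
    (fun x y => hψ ▸ ψ.toAdd_apply_eq_iff) fun x hx s hs => ?_
  · rw [natCard_scalarUnits, W.card_unitsFinset] at h
    exact (Nat.div_eq_of_eq_mul_left (by have := Fintype.one_lt_card (α := K); omega) h.symm).symm
  · rw [Submodule.mem_unitsFinset, Units.val_mul, mul_comm]
    exact W.mul_mem_of_mem_scalarUnits hs (Submodule.mem_unitsFinset.1 hx)

variable {S : Set (Submodule K F)} {δ : Fˣ} {W₀ : Submodule K F}

theorem mem_differencePairs_singerBlock_iff (hψ : ψ.ker = scalarUnits K F)
    (hS : ∀ c : Fˣ, ∀ W ∈ S, c • W ∈ S) (hW₀ : ∀ W ∈ S, (1 : F) ∈ W ∧ (δ : F) ∈ W ↔ W = W₀)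
    (hδ : ψ δ ≠ 1) {W : Submodule K F} (hW : W ∈ S) {a b : A} :
    (a, b) ∈ differencePairs (singerBlock ψ W) (ψ δ).toAdd ↔
      ∃ y : Fˣ, y⁻¹ • W = W₀ ∧ a = (ψ (y * δ)).toAdd ∧ b = (ψ y).toAdd := by
  simp only [differencePairs, singerBlock, mem_filter, mem_product, mem_image,
    Submodule.mem_unitsFinset]
  constructor
  · rintro ⟨⟨⟨x, hx, rfl⟩, ⟨y, hy, rfl⟩⟩, -, hxy⟩
    have hxyδ : (ψ x).toAdd = (ψ (y * δ)).toAdd := by simp [← hxy]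
    have hyδ : ((y * δ : Fˣ) : F) ∈ W := by
      rw [← mul_inv_cancel_left x (y * δ), mul_comm, Units.val_mul]
      exact W.mul_mem_of_mem_scalarUnits (hψ ▸ ψ.toAdd_apply_eq_iff.1 hxyδ.symm) hx
    refine ⟨y, (hW₀ _ (hS _ _ hW)).1 ⟨?_, ?_⟩, hxyδ, rfl⟩
    · rwa [Submodule.mem_inv_smul_iff, mul_one]
    · rwa [Submodule.mem_inv_smul_iff]
  · rintro ⟨y, hyW, rfl, rfl⟩
    have h := (hW₀ _ (hyW ▸ hS _ _ hW)).2 rfl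
    rw [← hyW, Submodule.mem_inv_smul_iff, Submodule.mem_inv_smul_iff, mul_one] at h
    refine ⟨⟨⟨y * δ, h.2, rfl⟩, ⟨y, h.1, rfl⟩⟩, ?_, ?_⟩ <;> simp [hδ]

theorem differencePairs_singerBlock_eq_empty (hψ : ψ.ker = scalarUnits K F)
    (hS : ∀ c : Fˣ, ∀ W ∈ S, c • W ∈ S) (hW₀ : ∀ W ∈ S, (1 : F) ∈ W ∧ (δ : F) ∈ W ↔ W = W₀)
    (hδ : ψ δ ≠ 1) {W : Submodule K F} (hW : W ∈ S) (hWW₀ : W ∉ MulAction.orbit Fˣ W₀) :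
    differencePairs (singerBlock ψ W) (ψ δ).toAdd = ∅ := by
  refine eq_empty_of_forall_notMem fun ⟨a, b⟩ hab => hWW₀ ?_
  obtain ⟨y, hy, -⟩ := (mem_differencePairs_singerBlock_iff hψ hS hW₀ hδ hW).1 hab
  exact ⟨y, by rw [← hy]; exact smul_inv_smul y W⟩

theorem differencePairs_singerBlock_smul_eq_singleton [Fintype K]
    (hψ : ψ.ker = scalarUnits K F) (hS : ∀ c : Fˣ, ∀ W ∈ S, c • W ∈ S)
    (hW₀ : ∀ W ∈ S, (1 : F) ∈ W ∧ (δ : F) ∈ W ↔ W = W₀) (hδ : ψ δ ≠ 1)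
    (hco : (finrank K W₀).Coprime (finrank K F)) {c : Fˣ} (hc : c • W₀ ∈ S) :
    differencePairs (singerBlock ψ (c • W₀)) (ψ δ).toAdd =
      {((ψ (c * δ)).toAdd, (ψ c).toAdd)} := by
  ext ⟨a, b⟩
  rw [mem_differencePairs_singerBlock_iff hψ hS hW₀ hδ hc, mem_singleton, Prod.mk.injEq]
  constructor
  · rintro ⟨y, hy, rfl, rfl⟩
    have hyc : y⁻¹ * c ∈ scalarUnits K F :=
      Submodule.mem_scalarUnits_of_smul_le hco ((mul_smul _ _ _).trans hy).le
    have h : (ψ c).toAdd = (ψ y).toAdd := ψ.toAdd_apply_eq_iff.2 (hψ ▸ hyc)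
    exact ⟨by simp [h], h.symm⟩
  · rintro ⟨rfl, rfl⟩
    exact ⟨c, inv_smul_smul c W₀, rfl, rfl⟩

theorem exists_isDifferenceFamily_of_singer_invariant_steiner [Fintype K] {k : ℕ}
    (S : Set (Submodule K F)) (hdim : ∀ W ∈ S, finrank K W = k)
    (hco : k.Coprime (finrank K F))
    (hcov : ∀ T : Submodule K F, finrank K T = 2 → ∃! W, W ∈ S ∧ T ≤ W)
    (hS : ∀ c : Fˣ, ∀ W ∈ S, c • W ∈ S) (hψ : ψ.ker = scalarUnits K F)
    (hsurj : Function.Surjective ψ) :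
    ∃ (s : ℕ) (B : Fin s → Finset A),
      IsDifferenceFamily B ((Fintype.card K ^ k - 1) / (Fintype.card K - 1)) 1 := by
  classical
  let ι := {o : MulAction.orbitRel.Quotient Fˣ (Submodule K F) // o.out ∈ S}
  suffices IsDifferenceFamily (fun o : ι => singerBlock ψ o.1.out) _ 1 from
    ⟨_, _, this.comp_equiv (Fintype.equivFin ι).symm⟩
  refine ⟨fun o => by rw [card_singerBlock hψ, hdim _ o.2], fun d hd => ?_⟩
  obtain ⟨δ, hδd⟩ := hsurj (.ofAdd d)
  have hδ : ψ δ ≠ 1 := by rwa [hδd, Ne, ofAdd_eq_one]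
  obtain rfl : d = (ψ δ).toAdd := by rw [hδd, toAdd_ofAdd]
  obtain ⟨W₀, hW₀S, hW₀⟩ := exists_mem_iff_one_mem_and_mem_of_steiner S hcov
    (by rwa [← mem_scalarUnits_iff, ← hψ])
  obtain ⟨c, hc⟩ : (⟦W₀⟧ : MulAction.orbitRel.Quotient Fˣ _).out ∈ MulAction.orbit Fˣ W₀ :=
    Quotient.mk_out (s := MulAction.orbitRel Fˣ _) W₀
  have hcS : c • W₀ ∈ S := hS c W₀ hW₀S
  rw [Fintype.sum_eq_single ⟨⟦W₀⟧, hc ▸ hcS⟩]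
  · dsimp only
    rw [← hc, differencePairs_singerBlock_smul_eq_singleton hψ hS hW₀ hδ (hdim W₀ hW₀S ▸ hco) hcS,
      card_singleton]
  · intro o ho
    rw [differencePairs_singerBlock_eq_empty hψ hS hW₀ hδ o.2 fun h => ho ?_, card_empty]
    exact Subtype.ext ((Quotient.out_eq o.1).symm.trans (Quotient.sound h))

end SingerBlock

theorem difference_family_of_singer_invariant_steiner_general_general (q k n : ℕ)
    [Fact (Nat.Prime q)] (hkn : k < n) (hco : Nat.Coprime k n)
    (S : Set (Submodule (ZMod q) (GaloisField q n)))
    (hdim : ∀ W ∈ S, Module.finrank (ZMod q) W = k)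
    (hcov : ∀ T : Submodule (ZMod q) (GaloisField q n), Module.finrank (ZMod q) T = 2 →
      ∃! W, W ∈ S ∧ T ≤ W)
    (hinv : ∀ c : GaloisField q n, c ≠ 0 → ∀ W ∈ S,
      Submodule.map (LinearMap.mulLeft (ZMod q) c) W ∈ S) :
    ∃ (s : ℕ) (B : Fin s → Finset (ZMod ((q ^ n - 1) / (q - 1)))),
      (∀ i, (B i).card = (q ^ k - 1) / (q - 1)) ∧
      (∀ d : ZMod ((q ^ n - 1) / (q - 1)), d ≠ 0 →
        (∑ i, ((B i ×ˢ B i).filter fun p => p.1 ≠ p.2 ∧ p.1 - p.2 = d).card) = 1) := by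
  classical
  let _ : Fintype (GaloisField q n) := Fintype.ofFinite _
  have hn : n ≠ 0 := by omega
  have hcard : Nat.card (GaloisField q n)ˣ =
      (q ^ n - 1) / (q - 1) * (Fintype.card (ZMod q) - 1) := by
    rw [Nat.card_units, GaloisField.card q n hn, ZMod.card,
      Nat.div_mul_cancel (by simpa using Nat.sub_one_dvd_pow_sub_one q n)]
  obtain ⟨ψ, hsurj, hker⟩ := IsCyclic.exists_surjective_ker_eq_powMonoidHom_ker hcard
  rw [← GaloisField.finrank q hn] at hco
  obtain ⟨s, B, hB⟩ := exists_isDifferenceFamily_of_singer_invariant_steiner S hdim hco hcov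
    (fun c W hW => hinv c c.ne_zero W hW) (hker.trans powMonoidHom_card_sub_one_ker_eq_scalarUnits)
    hsurj
  rw [ZMod.card] at hB
  exact ⟨s, B, hB⟩

/-- Let `q` be a prime and `k`, `n` coprime with `0 < k < n`. If there exists a
q-Steiner system `S_q[2, k, n]` on the `ZMod q`-vector space `GaloisField q n`
invariant under the Singer subgroup (the maps `x ↦ c * x` for nonzero `c`), then there
exists a `((q^n - 1)/(q - 1), (q^k - 1)/(q - 1), 1)` difference family over
`ZMod ((q^n - 1)/(q - 1))`. -/
theorem difference_family_of_singer_invariant_steiner_general (q k n : ℕ)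
    [Fact (Nat.Prime q)] (hk : 0 < k) (hkn : k < n) (hco : Nat.Coprime k n)
    (S : Set (Submodule (ZMod q) (GaloisField q n)))
    (hdim : ∀ W ∈ S, Module.finrank (ZMod q) W = k)
    (hcov : ∀ T : Submodule (ZMod q) (GaloisField q n), Module.finrank (ZMod q) T = 2 →
      ∃! W, W ∈ S ∧ T ≤ W)
    (hinv : ∀ c : GaloisField q n, c ≠ 0 → ∀ W ∈ S,
      Submodule.map (LinearMap.mulLeft (ZMod q) c) W ∈ S) :
    ∃ (s : ℕ) (B : Fin s → Finset (ZMod ((q ^ n - 1) / (q - 1)))),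
      (∀ i, (B i).card = (q ^ k - 1) / (q - 1)) ∧
      (∀ d : ZMod ((q ^ n - 1) / (q - 1)), d ≠ 0 →
        (∑ i, ((B i ×ˢ B i).filter fun p => p.1 ≠ p.2 ∧ p.1 - p.2 = d).card) = 1) :=
  difference_family_of_singer_invariant_steiner_general_general q k n hkn hco S hdim hcov hinv
end

section
/- There is no q-Steiner system S_2[2,3,7] on the F_2-vector space F_{2^7} that admits the Galois group Gal(F_{2^7}/F_2) as a group of automorphisms; that is, there is no set S of 3-dimensional F_2-subspaces of F_{2^7} such that every 2-dimensional subspace is contained in exactly one element of S and S is invariant under the Frobenius map x ↦ x^2. -/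
/-- The Frobenius map `x ↦ x ^ 2` on `GaloisField 2 7`, as a `ZMod 2`-linear map. -/
noncomputable def frobLin27 : GaloisField 2 7 →ₗ[ZMod 2] GaloisField 2 7 where
  toFun x := x ^ 2
  map_add' x y := add_pow_char x y 2
  map_smul' c x := by
    simp only [RingHom.id_apply, smul_pow, ZMod.pow_card]

/-!
Double counting gives `|S| = [7 2]_2 / [3 2]_2 = 381 ≡ 3 (mod 7)`. The Frobenius has order 7, so
it fixes at least three blocks. A Frobenius-invariant 3-space `W` cannot contain `1`: the
Frobenius fixes only `0` and `1`, and the number of its fixed points in `W` is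
`≡ |W| = 8 ≡ 1 (mod 7)`. Hence the characteristic polynomial of the Frobenius on `W` is a cubic
over `𝔽₂` without roots, `X³ + X + 1` or `X³ + X² + 1`, and by Cayley–Hamilton `W` is the kernel
of the corresponding linearized polynomial, which has at most 8 roots. So only two 3-spaces are
Frobenius-invariant.
-/

open Module Submodule Polynomial
open scoped Pointwise

section Grassmannian

variable {K V : Type*} [DivisionRing K] [Fintype K] [AddCommGroup V] [Module K V] [Finite V]

local notation "q" => Fintype.card K

theorem card_submodule_finrank_eq_mul_prod {k : ℕ} (hk : k ≤ finrank K V) :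
    Nat.card {T : Submodule K V // finrank K T = k} * ∏ i : Fin k, (q ^ k - q ^ i.val) =
      ∏ i : Fin k, (q ^ finrank K V - q ^ i.val) := by
  have := Fintype.ofFinite {T : Submodule K V // finrank K T = k}
  let spanOf : {s : Fin k → V // LinearIndependent K s} → {T : Submodule K V // finrank K T = k} :=
    fun s => ⟨span K (Set.range s.1), by rw [finrank_span_eq_card s.2, Fintype.card_fin]⟩
  have fiber (T : {T : Submodule K V // finrank K T = k}) :
      {s // spanOf s = T} ≃ {t : Fin k → T.1 // LinearIndependent K t} :=
    { toFun s := ⟨fun i => ⟨s.1.1 i, (congrArg Subtype.val s.2).le (subset_span ⟨i, rfl⟩)⟩,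
        LinearIndependent.of_comp T.1.subtype s.1.2⟩
      invFun t := ⟨⟨T.1.subtype ∘ t.1, t.2.map' _ (ker_subtype _)⟩, Subtype.ext <|
        eq_of_le_of_finrank_eq (span_le.2 (Set.range_subset_iff.2 fun i => (t.1 i).2))
          (by rw [finrank_span_eq_card (t.2.map' _ (ker_subtype _)), T.2, Fintype.card_fin])⟩
      left_inv _ := rfl
      right_inv _ := rfl }
  rw [← card_linearIndependent hk, ← Nat.card_congr (Equiv.sigmaFiberEquiv spanOf), Nat.card_sigma,
    Finset.sum_congr rfl fun T _ => (Nat.card_congr (fiber T)).trans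
      ((card_linearIndependent T.2.ge).trans (by rw [T.2]))]
  rw [Finset.sum_const, Finset.card_univ, smul_eq_mul, Nat.card_eq_fintype_card]

theorem card_submodule_le_finrank_eq_mul_prod (U : Submodule K V) {k : ℕ} (hk : k ≤ finrank K U) :
    Nat.card {T : Submodule K V // T ≤ U ∧ finrank K T = k} * ∏ i : Fin k, (q ^ k - q ^ i.val) =
      ∏ i : Fin k, (q ^ finrank K U - q ^ i.val) := by
  rw [← card_submodule_finrank_eq_mul_prod hk]
  congr 1
  refine Nat.card_congr ((Equiv.subtypeSubtypeEquivSubtypeInter (· ≤ U)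
    (fun T => finrank K T = k)).symm.trans (Equiv.subtypeEquiv (MapSubtype.orderIso U).symm.toEquiv
      fun T => ?_))
  rw [← finrank_map_subtype_eq U]
  change _ ↔ finrank K (map U.subtype (comap U.subtype T.1)) = k
  rw [map_comap_subtype, inf_of_le_right T.2]

end Grassmannian

section QSteiner

variable {K V : Type*} [DivisionRing K] [AddCommGroup V] [Module K V]

/-- `S` is a `q`-Steiner system `S_q[t, k, finrank K V]`. -/
def IsQSteinerSystem (t k : ℕ) (S : Set (Submodule K V)) : Prop :=
  (∀ W ∈ S, finrank K W = k) ∧ ∀ T : Submodule K V, finrank K T = t → ∃! W, W ∈ S ∧ T ≤ W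

variable [Fintype K] [Finite V]

local notation "q" => Fintype.card K

theorem IsQSteinerSystem.card_mul_prod {t k : ℕ} {S : Set (Submodule K V)}
    (hS : IsQSteinerSystem t k S) (htk : t ≤ k) (ht : t ≤ finrank K V) :
    Nat.card S * ∏ i : Fin t, (q ^ k - q ^ i.val) = ∏ i : Fin t, (q ^ finrank K V - q ^ i.val) := by
  have := Fintype.ofFinite S
  have hblock (T : {T : Submodule K V // finrank K T = t}) : ∃ W : S, T.1 ≤ W :=
    let ⟨W, hW, hTW⟩ := (hS.2 T.1 T.2).exists
    ⟨⟨W, hW⟩, hTW⟩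
  choose block hblock using hblock
  have fiber (W : S) : {T // block T = W} ≃ {T : Submodule K V // T ≤ W ∧ finrank K T = t} :=
    { toFun T := ⟨T.1.1, (hblock T.1).trans_eq (congrArg Subtype.val T.2), T.1.2⟩
      invFun T := ⟨⟨T.1, T.2.2⟩, Subtype.ext <|
        (hS.2 T.1 T.2.2).unique ⟨(block _).2, hblock ⟨T.1, T.2.2⟩⟩ ⟨W.2, T.2.1⟩⟩
      left_inv _ := rfl
      right_inv _ := rfl }
  rw [← card_submodule_finrank_eq_mul_prod ht, ← Nat.card_congr (Equiv.sigmaFiberEquiv block),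
    Nat.card_sigma, Finset.sum_mul,
    Finset.sum_congr rfl fun W _ => (congrArg (· * _) (Nat.card_congr (fiber W))).trans
      ((card_submodule_le_finrank_eq_mul_prod W.1 (hS.1 W W.2 ▸ htk)).trans (by rw [hS.1 W W.2]))]
  rw [Finset.sum_const, Finset.card_univ, smul_eq_mul, Nat.card_eq_fintype_card]

end QSteiner

theorem card_modEq_card_fixed_of_pow_eq_one {G α : Type*} [Group G] [MulAction G α] {p : ℕ}
    [Fact p.Prime] {g : G} (hg : g ^ p = 1) {s : Set α} [Finite s] (hs : Set.MapsTo (g • ·) s s) :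
    Nat.card s ≡ Nat.card {x | x ∈ s ∧ g • x = x} [MOD p] := by
  classical
  have := Fintype.ofFinite s
  let f : Function.End s := hs.restrict
  have hf : f ^ p ^ 1 = 1 := by
    funext x
    change (hs.restrict)^[p ^ 1] x = x
    rw [hs.iterate_restrict]
    exact Subtype.ext (by simp [smul_iterate, hg])
  have fixed : Function.fixedPoints f ≃ {x | x ∈ s ∧ g • x = x} :=
    (Equiv.subtypeEquivRight fun x => Subtype.ext_iff).trans
      (Equiv.subtypeSubtypeEquivSubtypeInter (· ∈ s) (fun x => g • x = x))
  rw [Nat.card_eq_fintype_card, ← Nat.card_congr fixed, Nat.card_eq_fintype_card]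
  exact Equiv.Perm.card_fixedPoints_modEq hf

theorem Polynomial.Monic.eq_cubic {R : Type*} [Semiring R] {c : R[X]} (hc : c.Monic)
    (h3 : c.natDegree = 3) :
    c = X ^ 3 + C (c.coeff 2) * X ^ 2 + C (c.coeff 1) * X + C (c.coeff 0) := by
  conv_lhs => rw [hc.as_sum, h3]
  simp only [Finset.sum_range_succ, Finset.sum_range_zero, pow_zero, pow_one, mul_one, zero_add]
  abel

theorem Polynomial.eq_of_monic_of_natDegree_eq_three_of_not_isRoot {c : (ZMod 2)[X]}
    (hc : c.Monic) (h3 : c.natDegree = 3) (hroot : ∀ μ, ¬ c.IsRoot μ) :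
    c = X ^ 3 + X + 1 ∨ c = X ^ 3 + X ^ 2 + 1 := by
  rw [hc.eq_cubic h3] at hroot ⊢
  generalize c.coeff 0 = d, c.coeff 1 = b, c.coeff 2 = a at hroot ⊢
  have h0 : d ≠ 0 := by simpa using hroot 0
  have h1 : 1 + a + b + d ≠ 0 := by simpa using hroot 1
  have key : ∀ a b d : ZMod 2, d ≠ 0 → 1 + a + b + d ≠ 0 →
      a = 0 ∧ b = 1 ∧ d = 1 ∨ a = 1 ∧ b = 0 ∧ d = 1 := by
    decide
  rcases key a b d h0 h1 with ⟨rfl, rfl, rfl⟩ | ⟨rfl, rfl, rfl⟩ <;> simp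

theorem LinearMap.coe_aeval_restrict_apply {R M : Type*} [CommSemiring R] [AddCommMonoid M] [Module R M]
    {f : Module.End R M} {W : Submodule R M} (hW : ∀ x ∈ W, f x ∈ W) (p : R[X]) (x : W) :
    (aeval (f.restrict hW) p x : M) = aeval f p x := by
  induction p using Polynomial.induction_on' with
  | add p q hp hq => simp [hp, hq]
  | monomial n r => simp [aeval_monomial, Module.End.pow_restrict n]

local notation "F" => GaloisField 2 7

instance fact_prime_seven : Fact (Nat.Prime 7) := ⟨by norm_num⟩

@[simp] theorem frobLin27_apply (x : F) : frobLin27 x = x ^ 2 := rfl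

theorem frobLin27_pow_apply (n : ℕ) (x : F) : (frobLin27 ^ n) x = x ^ 2 ^ n := by
  rw [Module.End.pow_apply]
  exact congrFun (pow_iterate 2 n) x

theorem finrank_ker_aeval_frobLin27_le {c : (ZMod 2)[X]} (hc : c.Monic) (h3 : c.natDegree = 3) :
    finrank (ZMod 2) (LinearMap.ker (aeval frobLin27 c)) ≤ 3 := by
  have := Fintype.ofFinite (LinearMap.ker (aeval frobLin27 c))
  set P : F[X] := X ^ 8 + C (algebraMap _ F (c.coeff 2)) * X ^ 4 +
    C (algebraMap _ F (c.coeff 1)) * X ^ 2 + C (algebraMap _ F (c.coeff 0)) * X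
  have hP : P.natDegree = 8 := by simp only [P]; compute_degree!
  have hroot (x : F) (hx : x ∈ LinearMap.ker (aeval frobLin27 c)) : P.IsRoot x := by
    rw [LinearMap.mem_ker, hc.eq_cubic h3] at hx
    simpa [P, frobLin27_pow_apply, Algebra.smul_def] using hx
  have hcard : Nat.card (LinearMap.ker (aeval frobLin27 c)) ≤ 8 := by
    rw [← hP, ← SetLike.coe_sort_coe, Nat.card_eq_card_toFinset]
    refine card_le_degree_of_subset_roots fun x hx => ?_
    have hx : x ∈ LinearMap.ker (aeval frobLin27 c) := by simpa using hx
    exact (mem_roots (fun h => by simp [h] at hP)).2 (hroot x hx)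
  rw [natCard_eq_pow_finrank (K := ZMod 2), Nat.card_zmod] at hcard
  exact (Nat.pow_le_pow_iff_right (by norm_num)).1 (hcard.trans_eq (by norm_num))

noncomputable abbrev frobAlgEquiv27 : GaloisField 2 7 ≃ₐ[ZMod 2] GaloisField 2 7 :=
  FiniteField.frobeniusAlgEquivOfAlgebraic (ZMod 2) (GaloisField 2 7)

theorem frobAlgEquiv27_apply (x : F) : frobAlgEquiv27 x = x ^ 2 := by
  rw [FiniteField.coe_frobeniusAlgEquivOfAlgebraic, ZMod.card]

theorem frobAlgEquiv27_pow_seven : frobAlgEquiv27 ^ 7 = 1 := by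
  have := pow_orderOf_eq_one frobAlgEquiv27
  rwa [FiniteField.orderOf_frobeniusAlgEquivOfAlgebraic,
    GaloisField.finrank 2 (by norm_num)] at this

theorem frobAlgEquiv27_smul_eq_map (W : Submodule (ZMod 2) F) :
    frobAlgEquiv27 • W = W.map frobLin27 :=
  congrArg W.map (LinearMap.ext frobAlgEquiv27_apply)

theorem one_notMem_of_map_frobLin27_eq {W : Submodule (ZMod 2) F} (h3 : finrank (ZMod 2) W = 3)
    (hW : W.map frobLin27 = W) : (1 : F) ∉ W := by
  intro h1
  have hmod := card_modEq_card_fixed_of_pow_eq_one frobAlgEquiv27_pow_seven (s := (W : Set F))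
    fun x hx => by rw [← hW]; exact ⟨x, hx, (frobAlgEquiv27_apply x).symm⟩
  have hfixed : {x | x ∈ (W : Set F) ∧ frobAlgEquiv27 • x = x} = {0, 1} := by
    ext x
    simp only [Set.mem_ofPred_eq, AlgEquiv.smul_def, frobAlgEquiv27_apply, Set.mem_insert_iff,
      Set.mem_singleton_iff]
    constructor
    · rintro ⟨-, hx⟩
      exact eq_zero_or_one_of_sq_eq_self hx
    · rintro (rfl | rfl) <;> simp [W.zero_mem, h1]
  rw [hfixed, Nat.card_coe_set_eq {0, 1}, Set.ncard_pair zero_ne_one, SetLike.coe_sort_coe,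
    natCard_eq_pow_finrank (K := ZMod 2), Nat.card_zmod, h3] at hmod
  exact absurd hmod (by decide)

theorem not_isRoot_charpoly_restrict_frobLin27 {W : Submodule (ZMod 2) F}
    (hW : ∀ x ∈ W, frobLin27 x ∈ W) (h1 : (1 : F) ∉ W) (μ : ZMod 2) :
    ¬ (LinearMap.charpoly (frobLin27.restrict hW)).IsRoot μ := by
  intro hroot
  obtain ⟨v, hv⟩ :=
    ((Module.End.hasEigenvalue_iff_isRoot_charpoly _ μ).2 hroot).exists_hasEigenvector
  have hsq : (v : F) ^ 2 = algebraMap (ZMod 2) F μ * v := by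
    simpa [Algebra.smul_def] using congrArg Subtype.val hv.apply_eq_smul
  have hv0 : (v : F) ≠ 0 := by simpa using hv.2
  have hvμ : (v : F) = algebraMap (ZMod 2) F μ := mul_right_cancel₀ hv0 (by rw [← sq, hsq])
  rcases eq_zero_or_one_of_sq_eq_self (ZMod.pow_card μ) with rfl | rfl
  · exact hv0 (by simpa using hvμ)
  · exact h1 (by simpa [hvμ] using v.2)

theorem eq_ker_of_map_frobLin27_eq {W : Submodule (ZMod 2) F} (h3 : finrank (ZMod 2) W = 3)
    (hW : W.map frobLin27 = W) :
    W = LinearMap.ker (aeval frobLin27 (X ^ 3 + X + 1 : (ZMod 2)[X])) ∨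
      W = LinearMap.ker (aeval frobLin27 (X ^ 3 + X ^ 2 + 1 : (ZMod 2)[X])) := by
  have hmaps : ∀ x ∈ W, frobLin27 x ∈ W := fun x hx => hW ▸ mem_map_of_mem hx
  set c := LinearMap.charpoly (frobLin27.restrict hmaps)
  have hc : c.Monic := LinearMap.charpoly_monic _
  have hc3 : c.natDegree = 3 := (LinearMap.charpoly_natDegree _).trans h3
  have hle : W ≤ LinearMap.ker (aeval frobLin27 c) := fun x hx => by
    rw [LinearMap.mem_ker, ← LinearMap.coe_aeval_restrict_apply hmaps c ⟨x, hx⟩, LinearMap.aeval_self_charpoly]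
    rfl
  have hWc : W = LinearMap.ker (aeval frobLin27 c) :=
    eq_of_le_of_finrank_le hle (h3 ▸ finrank_ker_aeval_frobLin27_le hc hc3)
  rcases eq_of_monic_of_natDegree_eq_three_of_not_isRoot hc hc3
    (not_isRoot_charpoly_restrict_frobLin27 hmaps (one_notMem_of_map_frobLin27_eq h3 hW)) with h | h
  exacts [Or.inl (h ▸ hWc), Or.inr (h ▸ hWc)]

theorem ncard_setOf_map_frobLin27_eq_le_two :
    {W : Submodule (ZMod 2) F | finrank (ZMod 2) W = 3 ∧ W.map frobLin27 = W}.ncard ≤ 2 := by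
  refine (Set.ncard_le_ncard (t := {LinearMap.ker (aeval frobLin27 (X ^ 3 + X + 1 : (ZMod 2)[X])),
    LinearMap.ker (aeval frobLin27 (X ^ 3 + X ^ 2 + 1 : (ZMod 2)[X]))})
    (fun _ hW => eq_ker_of_map_frobLin27_eq hW.1 hW.2) (Set.toFinite _)).trans ?_
  exact (Set.ncard_insert_le _ _).trans_eq (by rw [Set.ncard_singleton])

/-- There is no q-Steiner system S₂[2,3,7] on the `ZMod 2`-vector space
`GaloisField 2 7` that is invariant under the Frobenius map `x ↦ x ^ 2`, i.e. admitting
the Galois group `Gal(F_{2^7}/F_2)` as a group of automorphisms. -/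
theorem no_frobenius_invariant_q_steiner_2_3_7 :
    ¬ ∃ S : Set (Submodule (ZMod 2) (GaloisField 2 7)),
      (∀ W ∈ S, Module.finrank (ZMod 2) W = 3) ∧
      (∀ T : Submodule (ZMod 2) (GaloisField 2 7), Module.finrank (ZMod 2) T = 2 →
        ∃! W, W ∈ S ∧ T ≤ W) ∧
      (∀ W ∈ S, Submodule.map frobLin27 W ∈ S) := by
  rintro ⟨S, hdim, hunique, hinv⟩
  have h7 : finrank (ZMod 2) F = 7 := GaloisField.finrank 2 (by norm_num)
  have hcard : Nat.card S = 381 := by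
    have := IsQSteinerSystem.card_mul_prod (t := 2) ⟨hdim, hunique⟩ (by norm_num) (by omega)
    simp only [ZMod.card, h7, Fin.prod_univ_two, Fin.val_zero, Fin.val_one] at this
    omega
  have hmod := card_modEq_card_fixed_of_pow_eq_one frobAlgEquiv27_pow_seven (s := S)
    fun W hW => show frobAlgEquiv27 • W ∈ S from (frobAlgEquiv27_smul_eq_map W).symm ▸ hinv W hW
  have hfixed : Nat.card {W | W ∈ S ∧ frobAlgEquiv27 • W = W} ≤ 2 := by
    rw [Nat.card_coe_set_eq]
    refine (Set.ncard_le_ncard ?_ (Set.toFinite _)).trans ncard_setOf_map_frobLin27_eq_le_two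
    rintro W ⟨hW, hfix⟩
    exact ⟨hdim W hW, frobAlgEquiv27_smul_eq_map W ▸ hfix⟩
  rw [hcard, Nat.ModEq] at hmod
  omega
end
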